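/- arXiv:1709.05092 — 7 statements merged into one kernel-verified Lean document; each statement's English description precedes it below -/
import Mathlib

section
/- Let ν, μ be Borel probability measures on ℝ and suppose ν is the push-forward of μ under the affine map x ↦ λx + t with C^{−1} < λ < C. Then for every n, |H(ν, 𝒟_n) − H(μ, 𝒟_n)| = O_C(1), where 𝒟_n is the partition of ℝ into dyadic intervals [j2^{−n}, (j+1)2^{−n}) and H denotes Shannon entropy with respect to a partition. -/
open MeasureTheory

/-- The level-`n` dyadic interval `[j/2^n, (j+1)/2^n)`. -/
def dyadicInterval (n : ℕ) (j : ℤ) : Set ℝ :=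
  Set.Ico ((j : ℝ) / 2 ^ n) (((j : ℝ) + 1) / 2 ^ n)

/-- Shannon entropy of a measure with respect to the level-`n` dyadic partition. -/
noncomputable def dyadicEntropy (n : ℕ) (ν : Measure ℝ) : ℝ :=
  ∑' j : ℤ, Real.negMulLog (ν (dyadicInterval n j)).toReal

namespace DyadicAux

lemma measurableSet_dyadic (n : ℕ) (j : ℤ) : MeasurableSet (dyadicInterval n j) :=
  measurableSet_Ico

lemma mem_dyadic_iff {n : ℕ} {j : ℤ} {x : ℝ} :
    x ∈ dyadicInterval n j ↔ (j : ℝ) ≤ x * 2 ^ n ∧ x * 2 ^ n < (j : ℝ) + 1 := by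
  have h2 : (0:ℝ) < 2 ^ n := by positivity
  simp only [dyadicInterval, Set.mem_Ico, div_le_iff₀ h2, lt_div_iff₀ h2]

lemma mem_dyadic_floor (n : ℕ) (x : ℝ) : x ∈ dyadicInterval n ⌊x * 2 ^ n⌋ := by
  rw [mem_dyadic_iff]
  exact ⟨Int.floor_le _, Int.lt_floor_add_one _⟩

lemma eq_floor_of_mem {n : ℕ} {j : ℤ} {x : ℝ} (h : x ∈ dyadicInterval n j) :
    j = ⌊x * 2 ^ n⌋ := by
  rw [mem_dyadic_iff] at h
  exact (Int.floor_eq_iff.mpr h).symm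

lemma dyadic_disjoint (n : ℕ) : Pairwise (Function.onFun Disjoint (dyadicInterval n)) := by
  intro i j hij
  rw [Function.onFun, Set.disjoint_left]
  intro x hxi hxj
  exact hij ((eq_floor_of_mem hxi).trans (eq_floor_of_mem hxj).symm)

lemma dyadic_union (n : ℕ) : (⋃ j, dyadicInterval n j) = Set.univ := by
  ext x
  simp only [Set.mem_iUnion, Set.mem_univ, iff_true]
  exact ⟨⌊x * 2 ^ n⌋, mem_dyadic_floor n x⟩

lemma cover {C : ℝ} (hC : 0 < C) (n : ℕ) (a b : ℝ) (hab : b ≤ a + C / 2 ^ n) :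
    Set.Ico a b ⊆ ⋃ j ∈ Finset.Icc ⌊a * 2 ^ n⌋ (⌊a * 2 ^ n⌋ + (⌈C⌉₊ + 1)),
      dyadicInterval n j := by
  rintro x ⟨hax, hxb⟩
  have h2 : (0:ℝ) < 2 ^ n := by positivity
  simp only [Set.mem_iUnion, exists_prop]
  refine ⟨⌊x * 2 ^ n⌋, ?_, mem_dyadic_floor n x⟩
  rw [Finset.mem_Icc]
  constructor
  · exact Int.floor_le_floor (by nlinarith)
  · have h1 : (⌊x * 2 ^ n⌋ : ℝ) ≤ x * 2 ^ n := Int.floor_le _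
    have h3 : x * 2 ^ n < a * 2 ^ n + C := by
      have : x * 2 ^ n < (a + C / 2 ^ n) * 2 ^ n := by nlinarith
      have h4 : (a + C / 2 ^ n) * 2 ^ n = a * 2 ^ n + C := by field_simp
      linarith
    have h5 : (a : ℝ) * 2 ^ n < ⌊a * 2 ^ n⌋ + 1 := Int.lt_floor_add_one _
    have h6 : C ≤ (⌈C⌉₊ : ℝ) := Nat.le_ceil C
    have h7 : (⌊x * 2 ^ n⌋ : ℝ) < (⌊a * 2 ^ n⌋ : ℝ) + (⌈C⌉₊ + 1) + 1 := by push_cast; linarith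
    have h8 : (⌊x * 2 ^ n⌋ : ℤ) < ⌊a * 2 ^ n⌋ + (⌈C⌉₊ + 1) + 1 := by exact_mod_cast h7
    omega

lemma negMulLog_sum_le {ι : Type*} (s : Finset ι) (x : ι → ℝ) (hx : ∀ i ∈ s, 0 ≤ x i) :
    Real.negMulLog (∑ i ∈ s, x i) ≤ ∑ i ∈ s, Real.negMulLog (x i) := by
  set S := ∑ i ∈ s, x i with hSdef
  have hS : 0 ≤ S := Finset.sum_nonneg hx
  have key : ∀ i ∈ s, -(x i) * Real.log S ≤ Real.negMulLog (x i) := by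
    intro i hi
    rcases eq_or_lt_of_le (hx i hi) with h | h
    · simp [← h]
    · have hxS : x i ≤ S := Finset.single_le_sum hx hi
      have hlog : Real.log (x i) ≤ Real.log S := Real.log_le_log h hxS
      rw [Real.negMulLog]
      nlinarith
  calc Real.negMulLog S = ∑ i ∈ s, (-(x i) * Real.log S) := by
        rw [← Finset.sum_mul, Real.negMulLog, ← Finset.sum_neg_distrib]
      _ ≤ ∑ i ∈ s, Real.negMulLog (x i) := Finset.sum_le_sum key

lemma negMulLog_le_aux {x y : ℝ} (hx : 0 ≤ x) (hy : 0 < y) :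
    Real.negMulLog x ≤ -x * Real.log y + y - x := by
  rcases eq_or_lt_of_le hx with h | h
  · simp [← h]; linarith
  · have h1 : Real.log (y / x) ≤ y / x - 1 := Real.log_le_sub_one_of_pos (by positivity)
    rw [Real.log_div hy.ne' h.ne'] at h1
    have h2 : x * (Real.log y - Real.log x) ≤ x * (y / x - 1) :=
      mul_le_mul_of_nonneg_left h1 h.le
    have h3 : x * (y / x) = y := by field_simp
    rw [Real.negMulLog]
    nlinarith

lemma sum_negMulLog_le {ι : Type*} (s : Finset ι) (x : ι → ℝ) (hx : ∀ i ∈ s, 0 ≤ x i) :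
    ∑ i ∈ s, Real.negMulLog (x i) ≤
      Real.negMulLog (∑ i ∈ s, x i) + (∑ i ∈ s, x i) * Real.log s.card := by
  rcases s.eq_empty_or_nonempty with rfl | hne
  · simp
  set S := ∑ i ∈ s, x i with hSdef
  have hS0 : 0 ≤ S := Finset.sum_nonneg hx
  rcases eq_or_lt_of_le hS0 with h | hS
  · have hz : ∀ i ∈ s, x i = 0 := by
      intro i hi
      have := Finset.single_le_sum hx hi
      have := hx i hi
      linarith [h.symm]
    have : ∑ i ∈ s, Real.negMulLog (x i) = 0 := by
      apply Finset.sum_eq_zero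
      intro i hi; rw [hz i hi]; simp
    rw [this, show S = 0 from h.symm]
    simp
  · have hc : (0:ℝ) < s.card := by exact_mod_cast hne.card_pos
    set y := S / s.card with hy'
    have hy : 0 < y := by positivity
    have key : ∀ i ∈ s, Real.negMulLog (x i) ≤ -(x i) * Real.log y + y - x i :=
      fun i hi => negMulLog_le_aux (hx i hi) hy
    have step : ∑ i ∈ s, Real.negMulLog (x i) ≤
        ∑ i ∈ s, (-(x i) * Real.log y + y - x i) := Finset.sum_le_sum key
    have eq1 : ∑ i ∈ s, (-(x i) * Real.log y + y - x i)
        = -S * Real.log y + s.card * y - S := by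
      rw [Finset.sum_sub_distrib, Finset.sum_add_distrib, ← Finset.sum_mul,
        ← Finset.sum_neg_distrib, Finset.sum_const, nsmul_eq_mul]
    have eq2 : (s.card : ℝ) * y = S := by rw [hy']; field_simp
    have eq3 : Real.log y = Real.log S - Real.log s.card := by
      rw [hy', Real.log_div hS.ne' hc.ne']
    rw [eq1, eq2, eq3] at step
    rw [Real.negMulLog]
    nlinarith [step]

end DyadicAux

namespace DyadicAux

lemma measure_eq_sum_inter {ι : Type*} (μ : Measure ℝ) {E : Set ℝ} (hE : MeasurableSet E)
    (s : Finset ι) (P : ι → Set ℝ) (hP : ∀ i, MeasurableSet (P i))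
    (hdisj : Pairwise (Function.onFun Disjoint P))
    (hcov : E ⊆ ⋃ i ∈ s, P i) :
    μ E = ∑ i ∈ s, μ (E ∩ P i) := by
  have hE' : E = ⋃ i ∈ s, E ∩ P i := by
    apply Set.Subset.antisymm
    · intro x hx
      obtain ⟨i, his, hxi⟩ := Set.mem_iUnion₂.mp (hcov hx)
      exact Set.mem_iUnion₂.mpr ⟨i, his, hx, hxi⟩
    · exact Set.iUnion₂_subset fun i _ => Set.inter_subset_left
  conv_lhs => rw [hE']
  rw [measure_biUnion_finset ?_ fun i _ => hE.inter (hP i)]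
  intro i _ j _ hij
  exact ((hdisj hij).mono Set.inter_subset_right Set.inter_subset_right)

lemma one_sided {C : ℝ} (hC : 1 < C) (μ : Measure ℝ) [IsProbabilityMeasure μ]
    (l t : ℝ) (hl0 : C⁻¹ < l) (hlC : l < C) (n : ℕ)
    (hsum : Summable (fun j : ℤ => Real.negMulLog (μ (dyadicInterval n j)).toReal)) :
    Summable (fun i : ℤ =>
      Real.negMulLog ((Measure.map (fun x => l * x + t) μ) (dyadicInterval n i)).toReal) ∧
    dyadicEntropy n (Measure.map (fun x => l * x + t) μ) ≤
      dyadicEntropy n μ + Real.log ((⌈C⌉₊ : ℝ) + 2) := by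
  have hC0 : (0:ℝ) < C := lt_trans one_pos hC
  have hl : (0:ℝ) < l := lt_trans (inv_pos.mpr hC0) hl0
  have h2n : (0:ℝ) < 2 ^ n := by positivity
  set f : ℝ → ℝ := fun x => l * x + t with hf'
  have hf : Measurable f := (measurable_id.const_mul l).add_const t
  set ν := Measure.map f μ with hν'
  haveI : IsProbabilityMeasure ν := Measure.isProbabilityMeasure_map hf.aemeasurable
  set D := dyadicInterval n with hD'
  have hνapp : ∀ i, ν (D i) = μ (f ⁻¹' D i) := fun i =>
    Measure.map_apply hf (measurableSet_dyadic n i)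
  have hpre : ∀ i : ℤ, f ⁻¹' D i =
      Set.Ico (((i:ℝ) / 2 ^ n - t) / l) ((((i:ℝ) + 1) / 2 ^ n - t) / l) := by
    intro i
    ext x
    simp only [hD', dyadicInterval, Set.mem_preimage, Set.mem_Ico, hf',
      div_le_iff₀ hl, lt_div_iff₀ hl]
    constructor <;> rintro ⟨h1, h2⟩ <;> constructor <;> nlinarith [mul_comm l x]
  have hinvC : (1:ℝ) / l ≤ C := by
    rw [div_le_iff₀ hl]
    nlinarith [mul_lt_mul_of_pos_left hl0 hC0, mul_inv_cancel₀ hC0.ne']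
  have len1 : ∀ i : ℤ, (((i:ℝ) + 1) / 2 ^ n - t) / l ≤ ((i:ℝ) / 2 ^ n - t) / l + C / 2 ^ n := by
    intro i
    have e : (((i:ℝ) + 1) / 2 ^ n - t) / l = ((i:ℝ) / 2 ^ n - t) / l + (1 / l) / 2 ^ n := by
      field_simp
      ring
    have h2 : (1 / l) / 2 ^ n ≤ C / 2 ^ n := by gcongr
    linarith
  have len2 : ∀ j : ℤ, l * (((j:ℝ) + 1) / 2 ^ n) + t ≤ (l * ((j:ℝ) / 2 ^ n) + t) + C / 2 ^ n := by
    intro j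
    have e : l * (((j:ℝ) + 1) / 2 ^ n) = l * ((j:ℝ) / 2 ^ n) + l / 2 ^ n := by
      field_simp
    have h2 : l / 2 ^ n ≤ C / 2 ^ n := by gcongr
    linarith
  set mr : ℤ → ℤ := fun i => ⌊(((i:ℝ) / 2 ^ n - t) / l) * 2 ^ n⌋ with hmr
  set srow : ℤ → Finset ℤ := fun i => Finset.Icc (mr i) (mr i + (⌈C⌉₊ + 1)) with hsrow
  have hrowcov : ∀ i : ℤ, f ⁻¹' D i ⊆ ⋃ j ∈ srow i, D j := by
    intro i
    rw [hpre i]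
    exact cover hC0 n _ _ (len1 i)
  have hrow0 : ∀ i j, j ∉ srow i → μ (f ⁻¹' D i ∩ D j) = 0 := by
    intro i j hj
    have he : f ⁻¹' D i ∩ D j = ∅ := by
      rw [Set.eq_empty_iff_forall_notMem]
      rintro x ⟨hx1, hx2⟩
      obtain ⟨j', hj's, hxj'⟩ := Set.mem_iUnion₂.mp (hrowcov i hx1)
      rw [(eq_floor_of_mem hx2).trans (eq_floor_of_mem hxj').symm] at hj
      exact hj hj's
    rw [he, measure_empty]
  have hrowE : ∀ i, μ (f ⁻¹' D i) = ∑ j ∈ srow i, μ (f ⁻¹' D i ∩ D j) := fun i =>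
    measure_eq_sum_inter μ (hf (measurableSet_dyadic n i)) _ _
      (fun j => measurableSet_dyadic n j) (dyadic_disjoint n) (hrowcov i)
  set pc : ℤ → ℤ := fun j => ⌊(l * ((j:ℝ) / 2 ^ n) + t) * 2 ^ n⌋ with hpc
  set ucol : ℤ → Finset ℤ := fun j => Finset.Icc (pc j) (pc j + (⌈C⌉₊ + 1)) with hucol
  have hfx : ∀ (j : ℤ) (x : ℝ), x ∈ D j →
      f x ∈ Set.Ico (l * ((j:ℝ) / 2 ^ n) + t) (l * (((j:ℝ) + 1) / 2 ^ n) + t) := by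
    intro j x hx
    obtain ⟨h1, h2⟩ := hx
    constructor
    · simp only [hf']
      nlinarith
    · simp only [hf']
      nlinarith
  have hcolcov : ∀ (j : ℤ) (x : ℝ), x ∈ D j → ∃ i' ∈ ucol j, f x ∈ D i' := by
    intro j x hx
    have hm := cover hC0 n _ _ (len2 j) (hfx j x hx)
    obtain ⟨i', hi', hmem⟩ := Set.mem_iUnion₂.mp hm
    exact ⟨i', hi', hmem⟩
  have hcol0 : ∀ j i, i ∉ ucol j → μ (f ⁻¹' D i ∩ D j) = 0 := by
    intro j i hi
    have he : f ⁻¹' D i ∩ D j = ∅ := by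
      rw [Set.eq_empty_iff_forall_notMem]
      rintro x ⟨hx1, hx2⟩
      obtain ⟨i', hi's, hmem⟩ := hcolcov j x hx2
      rw [(eq_floor_of_mem hx1).trans (eq_floor_of_mem hmem).symm] at hi
      exact hi hi's
    rw [he, measure_empty]
  have hcolE : ∀ j, μ (D j) = ∑ i ∈ ucol j, μ (f ⁻¹' D i ∩ D j) := by
    intro j
    have h := measure_eq_sum_inter μ (measurableSet_dyadic n j) (ucol j) (fun i => f ⁻¹' D i)
      (fun i => hf (measurableSet_dyadic n i))
      (fun i i' hii' => Disjoint.preimage f (dyadic_disjoint n hii'))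
      (fun x hx => by
        obtain ⟨i', hi', hmem⟩ := hcolcov j x hx
        exact Set.mem_iUnion₂.mpr ⟨i', hi', hmem⟩)
    rw [h]
    exact Finset.sum_congr rfl fun i _ => by rw [Set.inter_comm]
  -- real-valued quantities
  have hfin : ∀ S : Set ℝ, μ S ≠ ⊤ := fun S => measure_ne_top μ S
  have hq0 : ∀ i j, (0:ℝ) ≤ (μ (f ⁻¹' D i ∩ D j)).toReal := fun i j => ENNReal.toReal_nonneg
  have hq1 : ∀ i j, (μ (f ⁻¹' D i ∩ D j)).toReal ≤ 1 := fun i j => by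
    simpa using ENNReal.toReal_mono ENNReal.one_ne_top prob_le_one
  have hrowR : ∀ i, (ν (D i)).toReal = ∑ j ∈ srow i, (μ (f ⁻¹' D i ∩ D j)).toReal := by
    intro i
    rw [hνapp i, hrowE i, ENNReal.toReal_sum fun j _ => hfin _]
  have hcolR : ∀ j, (μ (D j)).toReal = ∑ i ∈ ucol j, (μ (f ⁻¹' D i ∩ D j)).toReal := by
    intro j
    rw [hcolE j, ENNReal.toReal_sum fun i _ => hfin _]
  set A : ℤ → ℤ → ℝ := fun i j => Real.negMulLog (μ (f ⁻¹' D i ∩ D j)).toReal with hA'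
  have hA0 : ∀ i j, 0 ≤ A i j := fun i j => Real.negMulLog_nonneg (hq0 i j) (hq1 i j)
  have hArow0 : ∀ i j, j ∉ srow i → A i j = 0 := fun i j hj => by
    simp [hA', hrow0 i j hj]
  have hAcol0 : ∀ j i, i ∉ ucol j → A i j = 0 := fun j i hi => by
    simp [hA', hcol0 j i hi]
  have hrowA : ∀ i, ∑' j, A i j = ∑ j ∈ srow i, A i j := fun i =>
    tsum_eq_sum fun j hj => hArow0 i j hj
  have hcolA : ∀ j, ∑' i, A i j = ∑ i ∈ ucol j, A i j := fun j =>
    tsum_eq_sum fun i hi => hAcol0 j i hi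
  have hcsum : Summable fun j => (μ (D j)).toReal := by
    apply ENNReal.summable_toReal
    rw [← measure_iUnion (dyadic_disjoint n) fun j => measurableSet_dyadic n j]
    rw [dyadic_union n, measure_univ]
    exact ENNReal.one_ne_top
  have hctot : (∑' j, (μ (D j)).toReal) = 1 := by
    have h1 : (∑' j, μ (D j)) = 1 := by
      rw [← measure_iUnion (dyadic_disjoint n) fun j => measurableSet_dyadic n j]
      rw [dyadic_union n, measure_univ]
    have h2 := ENNReal.tsum_toReal_eq fun j => hfin (D j)
    rw [h1] at h2
    simpa using h2.symm
  have hcardu : ∀ j, (((ucol j).card : ℕ) : ℝ) = (⌈C⌉₊ : ℝ) + 2 := by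
    intro j
    have h : (ucol j).card = ⌈C⌉₊ + 2 := by
      rw [hucol]
      simp only [Int.card_Icc]
      omega
    rw [h]
    push_cast
    ring
  have colle : ∀ j, ∑ i ∈ ucol j, A i j ≤
      Real.negMulLog (μ (D j)).toReal + (μ (D j)).toReal * Real.log ((⌈C⌉₊ : ℝ) + 2) := by
    intro j
    have h := sum_negMulLog_le (ucol j) (fun i => (μ (f ⁻¹' D i ∩ D j)).toReal)
      (fun i _ => hq0 i j)
    rw [← hcolR j, hcardu j] at h
    exact h
  have hg : Summable fun j => Real.negMulLog (μ (D j)).toReal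
      + (μ (D j)).toReal * Real.log ((⌈C⌉₊ : ℝ) + 2) :=
    hsum.add (hcsum.mul_right _)
  have hB : Summable fun pr : ℤ × ℤ => A pr.2 pr.1 := by
    rw [summable_prod_of_nonneg fun pr => hA0 pr.2 pr.1]
    refine ⟨fun j => summable_of_ne_finset_zero (s := ucol j) fun i hi => hAcol0 j i hi, ?_⟩
    apply Summable.of_nonneg_of_le (fun j => tsum_nonneg fun i => hA0 i j) ?_ hg
    intro j
    rw [hcolA j]
    exact colle j
  have hF : Summable fun pr : ℤ × ℤ => A pr.1 pr.2 := hB.prod_symm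
  have hmarg : Summable fun i => ∑' j, A i j :=
    ((summable_prod_of_nonneg fun pr => hA0 pr.1 pr.2).mp hF).2
  have hmarg2 : Summable fun j => ∑' i, A i j :=
    ((summable_prod_of_nonneg fun pr => hA0 pr.2 pr.1).mp hB).2
  have hrowle : ∀ i, Real.negMulLog (ν (D i)).toReal ≤ ∑' j, A i j := by
    intro i
    rw [hrowA i, hrowR i]
    exact negMulLog_sum_le _ _ fun j _ => hq0 i j
  have hν1 : ∀ i, (ν (D i)).toReal ≤ 1 := fun i => by
    simpa using ENNReal.toReal_mono ENNReal.one_ne_top prob_le_one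
  have hνsum : Summable fun i => Real.negMulLog (ν (D i)).toReal :=
    Summable.of_nonneg_of_le
      (fun i => Real.negMulLog_nonneg ENNReal.toReal_nonneg (hν1 i)) hrowle hmarg
  refine ⟨hνsum, ?_⟩
  have hswap : (∑' pr : ℤ × ℤ, A pr.1 pr.2) = ∑' pr : ℤ × ℤ, A pr.2 pr.1 :=
    ((Equiv.prodComm ℤ ℤ).tsum_eq fun pr => A pr.2 pr.1)
  calc dyadicEntropy n ν = ∑' i, Real.negMulLog (ν (D i)).toReal := rfl
    _ ≤ ∑' i, ∑' j, A i j := Summable.tsum_le_tsum hrowle hνsum hmarg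
    _ = ∑' pr : ℤ × ℤ, A pr.1 pr.2 := (Summable.tsum_prod hF).symm
    _ = ∑' pr : ℤ × ℤ, A pr.2 pr.1 := hswap
    _ = ∑' j, ∑' i, A i j := Summable.tsum_prod hB
    _ ≤ ∑' j, (Real.negMulLog (μ (D j)).toReal
          + (μ (D j)).toReal * Real.log ((⌈C⌉₊ : ℝ) + 2)) := by
        refine Summable.tsum_le_tsum ?_ hmarg2 hg
        intro j
        rw [hcolA j]
        exact colle j
    _ = dyadicEntropy n μ + Real.log ((⌈C⌉₊ : ℝ) + 2) := by
        rw [Summable.tsum_add hsum (hcsum.mul_right _), tsum_mul_right, hctot, one_mul]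
        rfl

end DyadicAux


/-- If `ν` is the push-forward of a probability measure `μ` under `x ↦ λx + t` with
`C⁻¹ < λ < C`, then `|H(ν, 𝒟ₙ) − H(μ, 𝒟ₙ)| = O_C(1)`, uniformly in `n`, `λ`, `t`, `μ`. -/
theorem dyadicEntropy_map_affine (C : ℝ) (hC : 1 < C) :
    ∃ K : ℝ, ∀ (μ : Measure ℝ), IsProbabilityMeasure μ →
      ∀ (l t : ℝ), C⁻¹ < l → l < C → ∀ n : ℕ,
        |dyadicEntropy n (Measure.map (fun x => l * x + t) μ) - dyadicEntropy n μ| ≤ K := by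
  refine ⟨Real.log ((⌈C⌉₊ : ℝ) + 2), ?_⟩
  intro μ hμ l t hl0 hlC n
  haveI := hμ
  have hC0 : (0:ℝ) < C := lt_trans one_pos hC
  have hl : (0:ℝ) < l := lt_trans (inv_pos.mpr hC0) hl0
  have hf : Measurable fun x : ℝ => l * x + t := (measurable_id.const_mul l).add_const t
  have hg : Measurable fun x : ℝ => l⁻¹ * x + -(t / l) :=
    (measurable_id.const_mul _).add_const _
  haveI : IsProbabilityMeasure (Measure.map (fun x => l * x + t) μ) :=
    Measure.isProbabilityMeasure_map hf.aemeasurable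
  have hinv1 : C⁻¹ < l⁻¹ := inv_strictAnti₀ hl hlC
  have hinv2 : l⁻¹ < C := by
    have h := inv_strictAnti₀ (inv_pos.mpr hC0) hl0
    rwa [inv_inv] at h
  have hcomp :
      Measure.map (fun x => l⁻¹ * x + -(t / l)) (Measure.map (fun x => l * x + t) μ) = μ := by
    rw [Measure.map_map hg hf]
    have hcid : ((fun x => l⁻¹ * x + -(t / l)) ∘ fun x => l * x + t) = id := by
      funext x
      simp only [Function.comp, id_eq]
      field_simp
      ring
    rw [hcid, Measure.map_id]
  by_cases hsμ : Summable fun j : ℤ => Real.negMulLog (μ (dyadicInterval n j)).toReal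
  · obtain ⟨hsν, h1⟩ := DyadicAux.one_sided hC μ l t hl0 hlC n hsμ
    have h2 := (DyadicAux.one_sided hC (Measure.map (fun x => l * x + t) μ)
      l⁻¹ (-(t / l)) hinv1 hinv2 n hsν).2
    rw [hcomp] at h2
    rw [abs_sub_le_iff]
    exact ⟨by linarith, by linarith⟩
  · have hsν : ¬ Summable fun i : ℤ =>
        Real.negMulLog ((Measure.map (fun x => l * x + t) μ) (dyadicInterval n i)).toReal := by
      intro hsν
      have h := (DyadicAux.one_sided hC (Measure.map (fun x => l * x + t) μ)
        l⁻¹ (-(t / l)) hinv1 hinv2 n hsν).1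
      rw [hcomp] at h
      exact hsμ h
    have e1 : dyadicEntropy n (Measure.map (fun x => l * x + t) μ) = 0 :=
      tsum_eq_zero_of_not_summable hsν
    have e2 : dyadicEntropy n μ = 0 := tsum_eq_zero_of_not_summable hsμ
    rw [e1, e2, sub_zero, abs_zero]
    apply Real.log_nonneg
    have : (0:ℝ) ≤ (⌈C⌉₊ : ℝ) := Nat.cast_nonneg _
    linarith
end

section
/- If μ and ν are Borel probability measures supported on [−R, R], then for all n ∈ ℕ, H(μ ∗ ν, 𝒟_n) ≥ H(μ, 𝒟_n) − O_R(1), where μ ∗ ν denotes convolution and 𝒟_n the n-level dyadic partition of ℝ. -/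
/-!
Translating a measure by `t` shifts the level-`n` dyadic index of every point by `⌊2ⁿ t⌋` or
`⌊2ⁿ t⌋ + 1`. Each dyadic cell of the measure is therefore split between at most two cells of the
translate, and conversely, so by subadditivity of `x ↦ -x log x` and its concavity at the midpoint
translating costs at most `log 2` of dyadic entropy. The convolution `μ ∗ ν` is the `ν`-average of
the translates of `μ`, and by Jensen's inequality for `x ↦ -x log x` its dyadic entropy is at least
the average dyadic entropy of those translates.
-/

open MeasureTheory

/-- Convolution of two Borel measures on `ℝ`. -/
noncomputable def convMeasure (μ ν : Measure ℝ) : Measure ℝ :=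
  Measure.map (fun p : ℝ × ℝ => p.1 + p.2) (μ.prod ν)

open Real Set

namespace Real

lemma negMulLog_add_le {a b : ℝ} (ha : 0 ≤ a) (hb : 0 ≤ b) :
    negMulLog (a + b) ≤ negMulLog a + negMulLog b := by
  have key : ∀ {x y : ℝ}, 0 ≤ x → 0 ≤ y → -x * log (x + y) ≤ negMulLog x := by
    intro x y hx hy
    rcases hx.eq_or_lt with rfl | hx
    · simp
    · exact mul_le_mul_of_nonpos_left (log_le_log hx (by linarith)) (by linarith)
  have hab : negMulLog (a + b) = -a * log (a + b) + -b * log (b + a) := by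
    rw [negMulLog, add_comm b]; ring
  linarith [key ha hb, key hb ha]

lemma negMulLog_add_negMulLog_le {a b : ℝ} (ha : 0 ≤ a) (hb : 0 ≤ b) :
    negMulLog a + negMulLog b ≤ negMulLog (a + b) + (a + b) * log 2 := by
  have hmid := concaveOn_negMulLog.2 (mem_Ici.2 ha) (mem_Ici.2 hb)
    (by norm_num : (0 : ℝ) ≤ 2⁻¹) (by norm_num : (0 : ℝ) ≤ 2⁻¹) (by norm_num)
  have hhalf : negMulLog (2⁻¹ * a + 2⁻¹ * b) = 2⁻¹ * (negMulLog (a + b) + (a + b) * log 2) := by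
    rw [← mul_add, mul_comm, negMulLog_mul]
    simp only [negMulLog, log_inv]
    ring
  simp only [smul_eq_mul] at hmid
  linarith

lemma tsum_negMulLog_add_le_tsum_negMulLog_add_sub_one {a b : ℤ → ℝ} (ha : 0 ≤ a) (hb : 0 ≤ b)
    (ha' : a.HasFiniteSupport) (hb' : b.HasFiniteSupport) :
    ∑' k, negMulLog (a k + b k) ≤
      ∑' k, negMulLog (a k + b (k - 1)) + (∑' k, (a k + b k)) * log 2 := by
  have hb₁ : (fun k => b (k - 1)).HasFiniteSupport := hb'.comp_of_injective sub_left_injective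
  have hab₁ : (fun k => a k + b (k - 1)).HasFiniteSupport := ha'.add hb₁
  have summable {f : ℤ → ℝ} (hf : f.HasFiniteSupport) : Summable f :=
    summable_of_hasFiniteSupport hf
  have summable_negMulLog {f : ℤ → ℝ} (hf : f.HasFiniteSupport) :
      Summable fun k => negMulLog (f k) := summable (hf.fun_comp negMulLog_zero)
  have shift (f : ℤ → ℝ) : ∑' k, f (k - 1) = ∑' k, f k := (Equiv.subRight 1).tsum_eq f
  calc ∑' k, negMulLog (a k + b k)
      ≤ ∑' k, (negMulLog (a k) + negMulLog (b k)) :=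
        (summable_negMulLog (ha'.add hb')).tsum_le_tsum (fun k => negMulLog_add_le (ha k) (hb k))
          ((summable_negMulLog ha').add (summable_negMulLog hb'))
    _ = ∑' k, (negMulLog (a k) + negMulLog (b (k - 1))) := by
        rw [(summable_negMulLog ha').tsum_add (summable_negMulLog hb'),
          (summable_negMulLog ha').tsum_add (summable_negMulLog hb₁),
          shift fun k => negMulLog (b k)]
    _ ≤ ∑' k, (negMulLog (a k + b (k - 1)) + (a k + b (k - 1)) * log 2) :=
        ((summable_negMulLog ha').add (summable_negMulLog hb₁)).tsum_le_tsum
          (fun k => negMulLog_add_negMulLog_le (ha k) (hb (k - 1)))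
          ((summable_negMulLog hab₁).add ((summable hab₁).mul_right _))
    _ = ∑' k, negMulLog (a k + b (k - 1)) + (∑' k, (a k + b k)) * log 2 := by
        rw [(summable_negMulLog hab₁).tsum_add ((summable hab₁).mul_right _),
          tsum_mul_right, (summable ha').tsum_add (summable hb₁),
          (summable ha').tsum_add (summable hb'), shift b]

end Real

section FiberEntropy

variable {α ι : Type*} [MeasurableSpace α] {μ : Measure α}

noncomputable def fiberEntropy (μ : Measure α) (f : α → ι) : ℝ :=
  ∑' i, negMulLog (μ.real (f ⁻¹' {i}))

lemma fiberEntropy_comp_equiv {ι' : Type*} (μ : Measure α) (f : α → ι) (e : ι ≃ ι') :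
    fiberEntropy μ (e ∘ f) = fiberEntropy μ f := by
  rw [fiberEntropy, fiberEntropy, ← e.tsum_eq]
  congr! with i
  ext x
  simp

lemma fiberEntropy_map {β : Type*} [MeasurableSpace β] [MeasurableSpace ι]
    [MeasurableSingletonClass ι] {φ : α → β} {f : β → ι} (hφ : Measurable φ) (hf : Measurable f) :
    fiberEntropy (μ.map φ) f = fiberEntropy μ (f ∘ φ) := by
  simp only [fiberEntropy, map_measureReal_apply hφ (hf (measurableSet_singleton _)),
    preimage_comp]

lemma tsum_measureReal_preimage_singleton [MeasurableSpace ι] [MeasurableSingletonClass ι]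
    [Countable ι] [IsFiniteMeasure μ] {f : α → ι} (hf : Measurable f) :
    ∑' i, μ.real (f ⁻¹' {i}) = μ.real univ := by
  simp only [measureReal_def]
  rw [← ENNReal.tsum_toReal_eq fun _ => measure_ne_top μ _,
    ← measure_iUnion (pairwise_disjoint_fiber f) fun i => hf (measurableSet_singleton i),
    ← preimage_iUnion, iUnion_of_singleton, preimage_univ]

theorem fiberEntropy_le_of_eq_or_eq_add_one [IsFiniteMeasure μ] {f g : α → ℤ}
    (hf : Measurable f) (hg : Measurable g) (hgf : ∀ x, g x = f x ∨ g x = f x + 1)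
    (hfin : (fun k => μ.real (f ⁻¹' {k})).HasFiniteSupport) :
    fiberEntropy μ f ≤ fiberEntropy μ g + μ.real univ * log 2 := by
  set a : ℤ → ℝ := fun k => μ.real (f ⁻¹' {k} ∩ g ⁻¹' {k})
  set b : ℤ → ℝ := fun k => μ.real (f ⁻¹' {k} ∩ g ⁻¹' {k + 1})
  have hmeas (k l : ℤ) : MeasurableSet (f ⁻¹' {k} ∩ g ⁻¹' {l}) :=
    (hf (measurableSet_singleton k)).inter (hg (measurableSet_singleton l))
  have hsplit {s t u : Set α} (hu : MeasurableSet u) (hcover : ∀ x, x ∈ s ↔ x ∈ t ∨ x ∈ u)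
      (hdisj : ∀ x ∈ t, x ∉ u) : μ.real s = μ.real t + μ.real u := by
    rw [show s = t ∪ u from ext hcover, measureReal_union (disjoint_left.2 hdisj) hu]
  have hfiber_f (k : ℤ) : μ.real (f ⁻¹' {k}) = a k + b k :=
    hsplit (hmeas _ _)
      (fun x => show f x = k ↔ f x = k ∧ g x = k ∨ f x = k ∧ g x = k + 1 by have := hgf x; omega)
      (fun x (hx : f x = k ∧ g x = k) (hx' : f x = k ∧ g x = k + 1) => by omega)
  have hfiber_g (k : ℤ) : μ.real (g ⁻¹' {k}) = a k + b (k - 1) :=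
    hsplit (hmeas _ _)
      (fun x => show g x = k ↔ f x = k ∧ g x = k ∨ f x = k - 1 ∧ g x = k - 1 + 1 by
        have := hgf x; omega)
      (fun x (hx : f x = k ∧ g x = k) (hx' : f x = k - 1 ∧ g x = k - 1 + 1) => by omega)
  have hsupp {c : ℤ → ℝ} (hc : ∀ k, c k ≤ μ.real (f ⁻¹' {k})) (hc₀ : 0 ≤ c) : c.HasFiniteSupport :=
    hfin.subset fun k hk h0 => hk (le_antisymm (h0 ▸ hc k) (hc₀ k))
  have ha : 0 ≤ a := fun _ => measureReal_nonneg
  have hb : 0 ≤ b := fun _ => measureReal_nonneg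
  calc fiberEntropy μ f = ∑' k, negMulLog (a k + b k) := by simp_rw [fiberEntropy, hfiber_f]
    _ ≤ ∑' k, negMulLog (a k + b (k - 1)) + (∑' k, (a k + b k)) * log 2 :=
        tsum_negMulLog_add_le_tsum_negMulLog_add_sub_one ha hb
          (hsupp (fun k => measureReal_mono inter_subset_left) ha)
          (hsupp (fun k => measureReal_mono inter_subset_left) hb)
    _ = fiberEntropy μ g + μ.real univ * log 2 := by
        simp_rw [fiberEntropy, hfiber_g, ← hfiber_f, tsum_measureReal_preimage_singleton hf]

end FiberEntropy

section Dyadic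

variable {μ ν : Measure ℝ} {n : ℕ} {R S : ℝ}

noncomputable def dyadicIndex (n : ℕ) (x : ℝ) : ℤ := ⌊2 ^ n * x⌋

lemma measurable_dyadicIndex (n : ℕ) : Measurable (dyadicIndex n) :=
  (measurable_const_mul _).floor

lemma mem_dyadicInterval_iff {j : ℤ} {x : ℝ} : x ∈ dyadicInterval n j ↔ dyadicIndex n x = j := by
  have h2n : (0 : ℝ) < 2 ^ n := by positivity
  rw [dyadicInterval, mem_Ico, dyadicIndex, Int.floor_eq_iff, div_le_iff₀ h2n, lt_div_iff₀ h2n,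
    mul_comm (2 ^ n : ℝ) x]

lemma dyadicInterval_eq_preimage (n : ℕ) (j : ℤ) : dyadicInterval n j = dyadicIndex n ⁻¹' {j} :=
  ext fun _ => mem_dyadicInterval_iff

lemma measurableSet_dyadicInterval (n : ℕ) (j : ℤ) : MeasurableSet (dyadicInterval n j) :=
  measurableSet_Ico

lemma dyadicEntropy_eq_fiberEntropy (n : ℕ) (μ : Measure ℝ) :
    dyadicEntropy n μ = fiberEntropy μ (dyadicIndex n) := by
  simp only [dyadicEntropy, fiberEntropy, dyadicInterval_eq_preimage, measureReal_def]

lemma dyadicIndex_add_sub_eq_or_eq_add_one (n : ℕ) (x t : ℝ) :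
    dyadicIndex n (x + t) - ⌊2 ^ n * t⌋ = dyadicIndex n x ∨
      dyadicIndex n (x + t) - ⌊2 ^ n * t⌋ = dyadicIndex n x + 1 := by
  have lower := Int.le_floor_add (2 ^ n * x) (2 ^ n * t)
  have upper := Int.le_floor_add_floor (2 ^ n * x) (2 ^ n * t)
  rw [dyadicIndex, dyadicIndex, mul_add]
  omega

theorem dyadicEntropy_le_map_add_const [IsProbabilityMeasure μ]
    (hfin : (fun j => μ.real (dyadicInterval n j)).HasFiniteSupport) (t : ℝ) :
    dyadicEntropy n μ ≤ dyadicEntropy n (μ.map (· + t)) + log 2 := by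
  have htranslate : dyadicEntropy n (μ.map (· + t)) =
      fiberEntropy μ (fun x => dyadicIndex n (x + t) - ⌊2 ^ n * t⌋) := by
    rw [dyadicEntropy_eq_fiberEntropy,
      fiberEntropy_map (measurable_add_const t) (measurable_dyadicIndex n)]
    exact (fiberEntropy_comp_equiv μ _ (Equiv.subRight _)).symm
  rw [htranslate, dyadicEntropy_eq_fiberEntropy]
  simp only [dyadicInterval_eq_preimage] at hfin
  simpa using fiberEntropy_le_of_eq_or_eq_add_one (measurable_dyadicIndex n)
    (((measurable_dyadicIndex n).comp (measurable_add_const t)).sub_const _)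
    (dyadicIndex_add_sub_eq_or_eq_add_one n · t) hfin

noncomputable def dyadicIndices (n : ℕ) (R : ℝ) : Finset ℤ :=
  Finset.Icc (dyadicIndex n (-R)) (dyadicIndex n R)

lemma dyadicIndex_mem_dyadicIndices {x : ℝ} (hx : x ∈ Icc (-R) R) :
    dyadicIndex n x ∈ dyadicIndices n R :=
  Finset.mem_Icc.2 ⟨Int.floor_mono (by gcongr; exact hx.1), Int.floor_mono (by gcongr; exact hx.2)⟩

lemma measure_dyadicInterval_eq_zero_of_notMem (hμ : ∀ᵐ x ∂μ, x ∈ Icc (-R) R) {j : ℤ}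
    (hj : j ∉ dyadicIndices n R) : μ (dyadicInterval n j) = 0 := by
  rw [measure_eq_zero_iff_ae_notMem]
  filter_upwards [hμ] with x hx hxj
  exact hj (mem_dyadicInterval_iff.1 hxj ▸ dyadicIndex_mem_dyadicIndices hx)

lemma hasFiniteSupport_measureReal_dyadicInterval (hμ : ∀ᵐ x ∂μ, x ∈ Icc (-R) R) :
    (fun j => μ.real (dyadicInterval n j)).HasFiniteSupport :=
  (dyadicIndices n R).finite_toSet.subset fun j hj => by
    by_contra hj'
    exact hj (by simp [measureReal_def, measure_dyadicInterval_eq_zero_of_notMem hμ hj'])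

lemma dyadicEntropy_eq_sum (hμ : ∀ᵐ x ∂μ, x ∈ Icc (-R) R) :
    dyadicEntropy n μ = ∑ j ∈ dyadicIndices n R, negMulLog (μ.real (dyadicInterval n j)) :=
  tsum_eq_sum fun j hj => by simp [measure_dyadicInterval_eq_zero_of_notMem hμ hj]

lemma ae_mem_Icc_map_add_const (hμ : ∀ᵐ x ∂μ, x ∈ Icc (-R) R) {y : ℝ} (hy : y ∈ Icc (-S) S) :
    ∀ᵐ z ∂μ.map (· + y), z ∈ Icc (-(R + S)) (R + S) :=
  (ae_map_iff (measurable_add_const y).aemeasurable measurableSet_Icc).2 <|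
    hμ.mono fun x hx => ⟨by linarith [hx.1, hy.1], by linarith [hx.2, hy.2]⟩

lemma ae_mem_Icc_convMeasure [SFinite μ] [SFinite ν] (hμ : ∀ᵐ x ∂μ, x ∈ Icc (-R) R)
    (hν : ∀ᵐ y ∂ν, y ∈ Icc (-S) S) : ∀ᵐ z ∂convMeasure μ ν, z ∈ Icc (-(R + S)) (R + S) :=
  (ae_map_iff measurable_add.aemeasurable measurableSet_Icc).2 <|
    ((Measure.quasiMeasurePreserving_fst.ae hμ).and (Measure.quasiMeasurePreserving_snd.ae hν)).mono
      fun _ ⟨hx, hy⟩ => ⟨by linarith [hx.1, hy.1], by linarith [hx.2, hy.2]⟩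

lemma dyadicEntropy_map_add_const_ae_eq_sum (hμ : ∀ᵐ x ∂μ, x ∈ Icc (-R) R)
    (hν : ∀ᵐ y ∂ν, y ∈ Icc (-S) S) (n : ℕ) :
    (fun y => dyadicEntropy n (μ.map (· + y))) =ᵐ[ν] fun y =>
      ∑ j ∈ dyadicIndices n (R + S), negMulLog (μ.real ((· + y) ⁻¹' dyadicInterval n j)) := by
  filter_upwards [hν] with y hy
  rw [dyadicEntropy_eq_sum (ae_mem_Icc_map_add_const hμ hy)]
  simp only [map_measureReal_apply (measurable_add_const y) (measurableSet_dyadicInterval n _)]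

end Dyadic

section Convolution

variable {μ ν : Measure ℝ} {s : Set ℝ}

lemma convMeasure_apply [SFinite μ] [SFinite ν] (hs : MeasurableSet s) :
    convMeasure μ ν s = ∫⁻ y, μ ((· + y) ⁻¹' s) ∂ν := by
  rw [convMeasure, Measure.map_apply measurable_add hs, Measure.prod_apply_symm (measurable_add hs)]
  rfl

lemma measurable_measure_preimage_add_const [SFinite μ] (hs : MeasurableSet s) :
    Measurable fun y => μ ((· + y) ⁻¹' s) :=
  measurable_measure_prodMk_right (measurable_add hs)

lemma convMeasure_real_apply [IsFiniteMeasure μ] [SFinite ν] (hs : MeasurableSet s) :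
    (convMeasure μ ν).real s = ∫ y, μ.real ((· + y) ⁻¹' s) ∂ν := by
  rw [measureReal_def, convMeasure_apply hs]
  exact (integral_toReal (measurable_measure_preimage_add_const hs).aemeasurable
    (ae_of_all _ fun _ => measure_lt_top μ _)).symm

lemma integrable_measureReal_preimage_add_const [IsProbabilityMeasure μ] [IsFiniteMeasure ν]
    (hs : MeasurableSet s) : Integrable (fun y => μ.real ((· + y) ⁻¹' s)) ν :=
  .of_bound (measurable_measure_preimage_add_const hs).ennreal_toReal.aestronglyMeasurable 1 <|
    ae_of_all _ fun _ => by rw [Real.norm_of_nonneg measureReal_nonneg]; exact measureReal_le_one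

lemma integrable_negMulLog_measureReal_preimage_add_const [IsProbabilityMeasure μ]
    [IsFiniteMeasure ν] (hs : MeasurableSet s) :
    Integrable (fun y => negMulLog (μ.real ((· + y) ⁻¹' s))) ν :=
  .of_bound (continuous_negMulLog.measurable.comp
      (measurable_measure_preimage_add_const hs).ennreal_toReal).aestronglyMeasurable 1 <|
    ae_of_all _ fun _ => by
      rw [Real.norm_of_nonneg (negMulLog_nonneg measureReal_nonneg measureReal_le_one)]
      exact (negMulLog_le_one_sub_self measureReal_nonneg).trans (by simp)

theorem integral_negMulLog_le_negMulLog_convMeasure [IsProbabilityMeasure μ]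
    [IsProbabilityMeasure ν] (hs : MeasurableSet s) :
    ∫ y, negMulLog (μ.real ((· + y) ⁻¹' s)) ∂ν ≤ negMulLog ((convMeasure μ ν).real s) := by
  rw [convMeasure_real_apply hs]
  exact concaveOn_negMulLog.le_map_integral continuous_negMulLog.continuousOn isClosed_Ici
    (ae_of_all _ fun _ => measureReal_nonneg) (integrable_measureReal_preimage_add_const hs)
    (integrable_negMulLog_measureReal_preimage_add_const hs)

end Convolution

section Concavity

variable {μ ν : Measure ℝ} [IsProbabilityMeasure μ] [IsProbabilityMeasure ν] {R S : ℝ}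

lemma integrable_dyadicEntropy_map_add_const (hμ : ∀ᵐ x ∂μ, x ∈ Icc (-R) R)
    (hν : ∀ᵐ y ∂ν, y ∈ Icc (-S) S) (n : ℕ) :
    Integrable (fun y => dyadicEntropy n (μ.map (· + y))) ν :=
  (integrable_finsetSum _ fun j _ => integrable_negMulLog_measureReal_preimage_add_const
    (measurableSet_dyadicInterval n j)).congr (dyadicEntropy_map_add_const_ae_eq_sum hμ hν n).symm

theorem integral_dyadicEntropy_map_add_const_le (hμ : ∀ᵐ x ∂μ, x ∈ Icc (-R) R)
    (hν : ∀ᵐ y ∂ν, y ∈ Icc (-S) S) (n : ℕ) :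
    ∫ y, dyadicEntropy n (μ.map (· + y)) ∂ν ≤ dyadicEntropy n (convMeasure μ ν) := by
  rw [integral_congr_ae (dyadicEntropy_map_add_const_ae_eq_sum hμ hν n),
    integral_finsetSum _ fun j _ => integrable_negMulLog_measureReal_preimage_add_const
      (measurableSet_dyadicInterval n j),
    dyadicEntropy_eq_sum (ae_mem_Icc_convMeasure hμ hν)]
  exact Finset.sum_le_sum fun j _ =>
    integral_negMulLog_le_negMulLog_convMeasure (measurableSet_dyadicInterval n j)

end Concavity

theorem dyadicEntropy_conv_ge_general (R : ℝ) :
    ∃ K : ℝ, ∀ (μ ν : Measure ℝ), IsProbabilityMeasure μ → IsProbabilityMeasure ν →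
      μ (Set.Icc (-R) R) = 1 → ν (Set.Icc (-R) R) = 1 → ∀ n : ℕ,
        dyadicEntropy n μ - K ≤ dyadicEntropy n (convMeasure μ ν) := by
  refine ⟨log 2, fun μ ν _ _ hμR hνR n => ?_⟩
  have hμ : ∀ᵐ x ∂μ, x ∈ Icc (-R) R :=
    mem_ae_iff.2 ((prob_compl_eq_zero_iff measurableSet_Icc).2 hμR)
  have hν : ∀ᵐ y ∂ν, y ∈ Icc (-R) R :=
    mem_ae_iff.2 ((prob_compl_eq_zero_iff measurableSet_Icc).2 hνR)
  calc dyadicEntropy n μ - log 2 = ∫ _, (dyadicEntropy n μ - log 2) ∂ν := by simp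
    _ ≤ ∫ y, dyadicEntropy n (μ.map (· + y)) ∂ν :=
        integral_mono (integrable_const _) (integrable_dyadicEntropy_map_add_const hμ hν n) fun y =>
          sub_le_iff_le_add.2 <|
            dyadicEntropy_le_map_add_const (hasFiniteSupport_measureReal_dyadicInterval hμ) y
    _ ≤ dyadicEntropy n (convMeasure μ ν) := integral_dyadicEntropy_map_add_const_le hμ hν n

/-- If `μ, ν` are probability measures supported on `[−R,R]`, then for all `n`,
`H(μ ∗ ν, 𝒟ₙ) ≥ H(μ, 𝒟ₙ) − O_R(1)`. -/
theorem dyadicEntropy_conv_ge (R : ℝ) (hR : 0 < R) :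
    ∃ K : ℝ, ∀ (μ ν : Measure ℝ), IsProbabilityMeasure μ → IsProbabilityMeasure ν →
      μ (Set.Icc (-R) R) = 1 → ν (Set.Icc (-R) R) = 1 → ∀ n : ℕ,
        dyadicEntropy n μ - K ≤ dyadicEntropy n (convMeasure μ ν) :=
  dyadicEntropy_conv_ge_general R
end

section
/- Let (Ω, 𝓑, ℙ, T) be an ergodic measure-preserving system with Ω = I^ℕ the full shift on a finite alphabet I and ℙ a T-invariant ergodic Borel probability measure. For each i ∈ I let p_i be a probability vector of length k_i with strictly positive entries. Define the measure ℙ̄ on Ω × {1,…,k_max}^ℕ by ∫f dℙ̄ = ∫_Ω ∫ f(ω,u) dη̄^{(ω)}(u) dℙ(ω), where η̄^{(ω)} = ∏_{n=1}^∞ p_{ω_n} is the product measure on ∏_n {1,…,k_{ω_n}}. Then ℙ̄ is invariant and ergodic for the left shift on the product space. -/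
/-!
Write `S` for the shift on `ω` and `σ` for the shift on the digits `u`. The fibre measures are
shift-equivariant, `σ_* η_ω = η_{S ω}`, which gives invariance of `ℙ̄`. For a shift-invariant
set `A`, the section `A_ω` equals `σ⁻ⁿ (A_{Sⁿ ω})` for every `n`, so it is a tail event for the
product measure `η_ω`; since `η_ω(A_ω ∩ cylinder of length n) = η_ω(cylinder) · η_ω(A_ω)`, the
value `g ω = η_ω(A_ω)` satisfies `g = g²`, i.e. it is `0` or `1` (Kolmogorov's 0-1 law). As
`g ∘ S = g`, the set `{g = 1}` is `S`-invariant, hence of `ℙ`-measure `0` or `1`, and it has the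
same measure as `A`.
-/

open MeasureTheory ProbabilityTheory Set
open scoped ENNReal

namespace PiNat

variable {E : ℕ → Type*}

theorem isPiSystem_cylinders : IsPiSystem {s : Set (∀ n, E n) | ∃ x n, s = cylinder x n} := by
  rintro _ ⟨x, n, rfl⟩ _ ⟨y, m, rfl⟩ ⟨z, hzx, hzy⟩
  rw [← mem_cylinder_iff_eq.1 hzx, ← mem_cylinder_iff_eq.1 hzy]
  rcases le_total n m with h | h
  · exact ⟨z, m, inter_eq_right.2 (cylinder_anti z h)⟩
  · exact ⟨z, n, inter_eq_left.2 (cylinder_anti z h)⟩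

variable [∀ n, MeasurableSpace (E n)] [∀ n, MeasurableSingletonClass (E n)]

theorem measurableSet_cylinder (x : ∀ n, E n) (n : ℕ) : MeasurableSet (cylinder x n) := by
  rw [cylinder_eq_pi]
  exact .pi (Finset.range n).countable_toSet fun i _ => measurableSet_singleton (x i)

variable [∀ n, Countable (E n)]

theorem generateFrom_cylinders :
    MeasurableSpace.generateFrom {s : Set (∀ n, E n) | ∃ x n, s = cylinder x n} =
      MeasurableSpace.pi := by
  -- With the discrete topology on each factor, the cylinders form a countable basis of the
  -- product topology, whose Borel σ-algebra is the product σ-algebra.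
  let _ : ∀ n, TopologicalSpace (E n) := fun _ => ⊥
  have : ∀ n, DiscreteTopology (E n) := fun _ => ⟨rfl⟩
  have : ∀ n, BorelSpace (E n) := fun _ =>
    ⟨(eq_top_iff.2 fun s _ => s.to_countable.measurableSet).trans borel_eq_top_of_discrete.symm⟩
  rw [← (isTopologicalBasis_cylinders E).borel_eq_generateFrom, ← BorelSpace.measurable_eq]

theorem measure_ext_of_cylinder {μ ν : Measure (∀ n, E n)} [IsFiniteMeasure μ]
    (h : ∀ x n, μ (cylinder x n) = ν (cylinder x n)) : μ = ν := by
  refine ext_of_generate_finite _ generateFrom_cylinders.symm isPiSystem_cylinders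
    (by rintro _ ⟨x, n, rfl⟩; exact h x n) ?_
  rcases isEmpty_or_nonempty (∀ n, E n) with _ | ⟨⟨x⟩⟩
  · simp [univ_eq_empty_iff.2 ‹_›]
  · simpa [cylinder_zero] using h x 0

variable {α : Type*}

def shift (x : ℕ → α) : ℕ → α := fun n => x (n + 1)

theorem iterate_shift_apply (n : ℕ) (x : ℕ → α) (m : ℕ) : shift^[n] x m = x (m + n) := by
  induction n generalizing x with
  | zero => rfl
  | succ n ih => rw [Function.iterate_succ_apply, ih]; rfl

theorem measurable_shift [MeasurableSpace α] : Measurable (shift : (ℕ → α) → ℕ → α) :=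
  measurable_pi_lambda _ fun n => measurable_pi_apply (n + 1)

theorem cylinder_inter_preimage_iterate_shift_cylinder (u v : ℕ → α) (n m : ℕ) :
    cylinder u n ∩ shift^[n] ⁻¹' cylinder v m =
      cylinder (fun i => if i < n then u i else v (i - n)) (n + m) := by
  ext x
  simp only [mem_inter_iff, mem_preimage, mem_cylinder_iff, iterate_shift_apply]
  constructor
  · rintro ⟨hu, hv⟩ i hi
    split_ifs with h
    · exact hu i h
    · simpa [Nat.sub_add_cancel (not_lt.1 h)] using hv (i - n) (by omega)
  · intro h
    refine ⟨fun i hi => by simpa [hi] using h i (by omega), fun j hj => ?_⟩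
    simpa using h (j + n) (by omega)

end PiNat

open PiNat

section ProductFamily

variable {I α : Type*} [MeasurableSpace α]

/-- `η ω` is the product measure `⊗ₙ p (ω n)` on `ℕ → α`, described by its values on
cylinders. -/
def IsProductFamily (p : I → α → ℝ≥0∞) (η : (ℕ → I) → Measure (ℕ → α)) : Prop :=
  ∀ ω n u, η ω (cylinder u n) = ∏ i ∈ Finset.range n, p (ω i) (u i)

variable {p : I → α → ℝ≥0∞} {η : (ℕ → I) → Measure (ℕ → α)}

namespace IsProductFamily

variable [Nonempty α]

theorem isProbabilityMeasure (h : IsProductFamily p η) (ω : ℕ → I) :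
    IsProbabilityMeasure (η ω) :=
  ⟨by simpa [cylinder_zero] using h ω 0 fun _ => Classical.arbitrary α⟩

variable [Countable α] [MeasurableSingletonClass α]

theorem measure_cylinder_inter_preimage_iterate_shift (h : IsProductFamily p η) (ω : ℕ → I)
    (u : ℕ → α) (n : ℕ) {B : Set (ℕ → α)} (hB : MeasurableSet B) :
    η ω (cylinder u n ∩ shift^[n] ⁻¹' B) = η ω (cylinder u n) * η (shift^[n] ω) B := by
  have := h.isProbabilityMeasure ω
  have hmeas : Measurable (shift^[n] : (ℕ → α) → ℕ → α) := measurable_shift.iterate n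
  suffices ((η ω).restrict (cylinder u n)).map (shift^[n]) =
      η ω (cylinder u n) • η (shift^[n] ω) by
    rw [inter_comm, ← Measure.restrict_apply (hmeas hB), ← Measure.map_apply hmeas hB, this,
      Measure.smul_apply, smul_eq_mul]
  refine measure_ext_of_cylinder fun v m => ?_
  rw [Measure.map_apply hmeas (measurableSet_cylinder v m),
    Measure.restrict_apply (hmeas (measurableSet_cylinder v m)), inter_comm,
    cylinder_inter_preimage_iterate_shift_cylinder, Measure.smul_apply, smul_eq_mul, h, h, h,
    Finset.prod_range_add]
  congr 1
  · exact Finset.prod_congr rfl fun i hi => by simp [Finset.mem_range.1 hi]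
  · exact Finset.prod_congr rfl fun j _ => by simp [iterate_shift_apply, add_comm]

theorem map_shift (h : IsProductFamily p η) (hp : ∀ i, ∑' a, p i a = 1) (ω : ℕ → I) :
    (η ω).map shift = η (shift ω) := by
  ext B hB
  rw [Measure.map_apply measurable_shift hB]
  have hfiber : ∀ a : α, (fun x : ℕ → α => x 0) ⁻¹' {a} = cylinder (fun _ => a) 1 := by
    intro a; ext x; simp [mem_cylinder_iff]
  calc η ω (shift ⁻¹' B)
      = ∑' a : α, η ω (cylinder (fun _ => a) 1 ∩ shift^[1] ⁻¹' B) := by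
        have := tsum_measure_preimage_singleton (μ := (η ω).restrict (shift ⁻¹' B))
          countable_univ fun a _ => measurable_pi_apply 0 (measurableSet_singleton a)
        rw [preimage_univ, Measure.restrict_apply_univ,
          tsum_univ fun a => (η ω).restrict (shift ⁻¹' B) ((fun x : ℕ → α => x 0) ⁻¹' {a})] at this
        rw [← this]
        refine tsum_congr fun a => ?_
        rw [Measure.restrict_apply' (measurable_shift hB), hfiber, Function.iterate_one]
    _ = ∑' a : α, p (ω 0) a * η (shift ω) B := by
        simp_rw [h.measure_cylinder_inter_preimage_iterate_shift ω _ 1 hB, h ω 1,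
          Finset.prod_range_one, Function.iterate_one]
    _ = η (shift ω) B := by rw [ENNReal.tsum_mul_right, hp, one_mul]

theorem map_iterate_shift (h : IsProductFamily p η) (hp : ∀ i, ∑' a, p i a = 1) (n : ℕ)
    (ω : ℕ → I) : (η ω).map (shift^[n]) = η (shift^[n] ω) := by
  induction n generalizing ω with
  | zero => exact Measure.map_id
  | succ n ih =>
    rw [Function.iterate_succ, ← Measure.map_map (measurable_shift.iterate n) measurable_shift,
      h.map_shift hp, ih, Function.iterate_succ_apply]

theorem measure_eq_zero_or_one_of_tail (h : IsProductFamily p η) (hp : ∀ i, ∑' a, p i a = 1)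
    (ω : ℕ → I) {B : Set (ℕ → α)}
    (hB : ∀ n, ∃ C, MeasurableSet C ∧ shift^[n] ⁻¹' C = B) : η ω B = 0 ∨ η ω B = 1 := by
  have := h.isProbabilityMeasure ω
  have hBm : MeasurableSet B := by
    obtain ⟨C, hC, rfl⟩ := hB 0
    exact hC
  have hindep : (η ω).restrict B = η ω B • η ω := by
    refine measure_ext_of_cylinder fun u n => ?_
    obtain ⟨C, hC, hCB⟩ := hB n
    rw [Measure.restrict_apply (measurableSet_cylinder u n), ← hCB,
      h.measure_cylinder_inter_preimage_iterate_shift ω u n hC, ← h.map_iterate_shift hp,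
      Measure.map_apply (measurable_shift.iterate n) hC, Measure.smul_apply, smul_eq_mul,
      mul_comm]
  have hidem : η ω B * η ω B = η ω B := by
    simpa [Measure.restrict_apply hBm] using (congrArg (· B) hindep).symm
  refine or_iff_not_imp_left.2 fun h0 => (ENNReal.mul_right_inj h0 (measure_ne_top _ _)).1 ?_
  rw [hidem, mul_one]

end IsProductFamily

end ProductFamily

section SkewProduct

variable {X Y : Type*} [MeasurableSpace X] [MeasurableSpace Y] {S : X → X} {σ : Y → Y}
  {P : Measure X} {κ : Kernel X Y}

theorem MeasureTheory.Measure.bind_map_prodMk_eq_compProd [SFinite P] [IsSFiniteKernel κ] :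
    (P.bind fun x => (κ x).map (Prod.mk x)) = P ⊗ₘ κ := by
  have hmeas : Measurable fun x => (κ x).map (Prod.mk x) :=
    Measure.measurable_of_measurable_coe _ fun A hA => by
      simp_rw [Measure.map_apply measurable_prodMk_left hA]
      exact Kernel.measurable_kernel_prodMk_left hA
  ext A hA
  rw [Measure.bind_apply hA hmeas.aemeasurable, Measure.compProd_apply hA]
  exact lintegral_congr fun x => Measure.map_apply measurable_prodMk_left hA

variable [IsSFiniteKernel κ]

theorem measurePreserving_prodMap_compProd [SFinite P] (hS : MeasurePreserving S P P)
    (hσ : Measurable σ) (hκ : ∀ x, (κ x).map σ = κ (S x)) :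
    MeasurePreserving (Prod.map S σ) (P ⊗ₘ κ) (P ⊗ₘ κ) := by
  refine ⟨hS.measurable.prodMap hσ, Measure.ext fun A hA => ?_⟩
  have hsection :
      ∀ x, κ x (Prod.mk x ⁻¹' (Prod.map S σ ⁻¹' A)) = κ (S x) (Prod.mk (S x) ⁻¹' A) :=
    fun x => by rw [← hκ, Measure.map_apply hσ (measurable_prodMk_left hA)]; rfl
  rw [Measure.map_apply (hS.measurable.prodMap hσ) hA, Measure.compProd_apply hA,
    Measure.compProd_apply (hS.measurable.prodMap hσ hA), lintegral_congr hsection]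
  exact hS.lintegral_comp (Kernel.measurable_kernel_prodMk_left hA)

theorem ergodic_prodMap_compProd [IsProbabilityMeasure P] [IsMarkovKernel κ] (hS : Ergodic S P)
    (hσ : Measurable σ) (hκ : ∀ x, (κ x).map σ = κ (S x))
    (htail : ∀ x B, (∀ n, ∃ C, MeasurableSet C ∧ σ^[n] ⁻¹' C = B) → κ x B = 0 ∨ κ x B = 1) :
    Ergodic (Prod.map S σ) (P ⊗ₘ κ) := by
  refine ⟨measurePreserving_prodMap_compProd hS.toMeasurePreserving hσ hκ, ⟨fun A hA hinv => ?_⟩⟩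
  set g : X → ℝ≥0∞ := fun x => κ x (Prod.mk x ⁻¹' A)
  have hsection : ∀ n x, σ^[n] ⁻¹' (Prod.mk (S^[n] x) ⁻¹' A) = Prod.mk x ⁻¹' A := by
    intro n
    induction n with
    | zero => exact fun x => rfl
    | succ n ih =>
      intro x
      rw [Function.iterate_succ, preimage_comp, Function.iterate_succ_apply, ih]
      conv_rhs => rw [← hinv]
      rfl
  have hg_inv : ∀ x, g (S x) = g x := fun x => by
    simp only [g, ← hκ, Measure.map_apply hσ (measurable_prodMk_left hA)]
    rw [← hsection 1 x]; rfl
  have hg01 : ∀ x, g x = 0 ∨ g x = 1 := fun x =>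
    htail x _ fun n => ⟨_, measurable_prodMk_left hA, hsection n x⟩
  set G := g ⁻¹' {1}
  have hG : MeasurableSet G := Kernel.measurable_kernel_prodMk_left hA (measurableSet_singleton 1)
  have hA_G : (P ⊗ₘ κ) A = P G := by
    rw [Measure.compProd_apply hA, ← lintegral_indicator_one hG]
    refine lintegral_congr fun x => ?_
    rcases hg01 x with h | h <;> simp [G, g, h]
  have hG_inv : S ⁻¹' G = G := by
    ext x
    simp only [G, mem_preimage, hg_inv]
  rw [Filter.eventuallyConst_set', ae_eq_empty, ae_eq_univ, prob_compl_eq_zero_iff hA, hA_G]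
  exact hS.prob_eq_zero_or_one hG hG_inv

end SkewProduct

theorem skew_product_ergodic_general {I : Type*} [MeasurableSpace I]
    (p : I → ℕ → ℝ≥0∞)
    (hp_sum : ∀ i, ∑' j : ℕ, p i j = 1)
    (P : Measure (ℕ → I)) [IsProbabilityMeasure P]
    (herg : Ergodic (fun ω (n : ℕ) => ω (n + 1)) P)
    (η : (ℕ → I) → Measure (ℕ → ℕ))
    (hηmeas : Measurable η)
    (hηcyl : ∀ (ω : ℕ → I) (n : ℕ) (u : ℕ → ℕ),
      η ω {x | ∀ i < n, x i = u i} = ∏ i ∈ Finset.range n, p (ω i) (u i)) :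
    MeasurePreserving
        (fun z : (ℕ → I) × (ℕ → ℕ) => (fun n => z.1 (n + 1), fun n => z.2 (n + 1)))
        (P.bind fun ω => (η ω).map (fun u => (ω, u)))
        (P.bind fun ω => (η ω).map (fun u => (ω, u)))
      ∧ Ergodic
        (fun z : (ℕ → I) × (ℕ → ℕ) => (fun n => z.1 (n + 1), fun n => z.2 (n + 1)))
        (P.bind fun ω => (η ω).map (fun u => (ω, u))) := by
  have hη : IsProductFamily p η := hηcyl
  let κ : Kernel (ℕ → I) (ℕ → ℕ) := ⟨η, hηmeas⟩
  have : IsMarkovKernel κ := ⟨hη.isProbabilityMeasure⟩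
  have hbind : (P.bind fun ω => (η ω).map (fun u => (ω, u))) = P ⊗ₘ κ :=
    Measure.bind_map_prodMk_eq_compProd (κ := κ)
  have hergodic : Ergodic (Prod.map shift shift) (P ⊗ₘ κ) :=
    ergodic_prodMap_compProd herg measurable_shift (hη.map_shift hp_sum)
      fun ω _ => hη.measure_eq_zero_or_one_of_tail hp_sum ω
  rw [hbind]
  exact ⟨hergodic.toMeasurePreserving, hergodic⟩

/-- If `ℙ` is a shift-invariant ergodic measure on `Ω = I^ℕ` and `ℙ̄` is the skew-product
measure on `Ω × ℕ^ℕ` obtained by choosing, given `ω`, the digits independently with the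
probability vectors `p_{ω_n}` (encoded through the cylinder condition `hηcyl`), then `ℙ̄`
is invariant and ergodic for the left shift on the product space. -/
theorem skew_product_ergodic {I : Type*} [Fintype I] [MeasurableSpace I]
    [MeasurableSingletonClass I]
    (k : I → ℕ) (hk : ∀ i, 1 ≤ k i)
    (p : I → ℕ → ℝ≥0∞)
    (hp_pos : ∀ i j, j < k i → 0 < p i j)
    (hp_zero : ∀ i j, k i ≤ j → p i j = 0)
    (hp_sum : ∀ i, ∑' j : ℕ, p i j = 1)
    (P : Measure (ℕ → I)) [IsProbabilityMeasure P]
    (herg : Ergodic (fun ω (n : ℕ) => ω (n + 1)) P)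
    (η : (ℕ → I) → Measure (ℕ → ℕ))
    (hηprob : ∀ ω, IsProbabilityMeasure (η ω))
    (hηmeas : Measurable η)
    (hηcyl : ∀ (ω : ℕ → I) (n : ℕ) (u : ℕ → ℕ),
      η ω {x | ∀ i < n, x i = u i} = ∏ i ∈ Finset.range n, p (ω i) (u i)) :
    MeasurePreserving
        (fun z : (ℕ → I) × (ℕ → ℕ) => (fun n => z.1 (n + 1), fun n => z.2 (n + 1)))
        (P.bind fun ω => (η ω).map (fun u => (ω, u)))
        (P.bind fun ω => (η ω).map (fun u => (ω, u)))
      ∧ Ergodic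
        (fun z : (ℕ → I) × (ℕ → ℕ) => (fun n => z.1 (n + 1), fun n => z.2 (n + 1)))
        (P.bind fun ω => (η ω).map (fun u => (ω, u))) :=
  skew_product_ergodic_general p hp_sum P herg η hηmeas hηcyl
end

section
/- (Maker's ergodic theorem) Let (X, 𝓑, ℙ, T) be a measure-preserving system and (g_n) a sequence of integrable functions with g_n(x) → g_∞(x) ℙ-a.e. and sup_n |g_n| integrable. Then for ℙ-a.e. x, lim_{n→∞} (1/n) ∑_{k=0}^{n−1} g_{n−k}(T^k x) = lim_{n→∞} (1/n) ∑_{k=0}^{n−1} g_∞(T^k x); moreover if the system is ergodic, the limit equals ∫ g_∞ dℙ for a.e. x. -/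
/-!
Put `H_N = sup_{m ≥ N} |g_m - g_∞|`. Splitting the sum at `k = n - N`,
`|(1/n) ∑_{k<n} g_{n-k}(T^k x) - (1/n) ∑_{k<n} g_∞(T^k x)|` is at most the Birkhoff average of
`H_N` plus `1/n` times the last `N` terms of the Birkhoff sum of `H_0`; the latter tend to `0`
because the averages of `H_0` converge. As `H_N → 0` a.e. under the integrable bound
`G + |g_∞|`, `∫ H_N → 0`, and the maximal inequality `β μ(E) ≤ ∫_E f`, valid on every
`T`-invariant set `E` on which `limsup (1/n) S_n f > β`, then shows that a.e. the limsup of the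
averages of `H_N` tends to `0` as `N → ∞`.

Birkhoff's pointwise ergodic theorem, needed for `g_∞` and `H_0`, comes from the same maximal
inequality (Garsia's proof): the sets where `limsup` of the averages is infinite, or exceeds
`liminf` by a rational gap, are invariant and null. In the ergodic case an invariant set is null
or conull, which pins the limit to `∫ f`.
-/

open MeasureTheory Filter Topology Finset

section BirkhoffSum

variable {X : Type*} {T : X → X} {f : X → ℝ}

theorem birkhoffAverage_eq_birkhoffSum_div (T : X → X) (f : X → ℝ) (n : ℕ) (x : X) :
    birkhoffAverage ℝ T f n x = birkhoffSum T f n x / n := by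
  rw [birkhoffAverage, smul_eq_mul, div_eq_inv_mul]

theorem birkhoffSum_sub_const (T : X → X) (f : X → ℝ) (c : ℝ) (n : ℕ) (x : X) :
    birkhoffSum T (fun y => f y - c) n x = birkhoffSum T f n x - n * c := by
  simp [birkhoffSum, sum_sub_distrib]

variable [MeasurableSpace X] {μ : Measure X}

theorem Measurable.birkhoffSum (hf : Measurable f) (hT : Measurable T) (n : ℕ) :
    Measurable (birkhoffSum T f n) :=
  Finset.measurable_sum _ fun i _ => hf.comp (hT.iterate i)

theorem Measurable.birkhoffAverage (hf : Measurable f) (hT : Measurable T) (n : ℕ) :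
    Measurable (birkhoffAverage ℝ T f n) := by
  unfold _root_.birkhoffAverage
  exact (hf.birkhoffSum hT n).const_smul ((n : ℝ)⁻¹)

theorem MeasureTheory.Integrable.birkhoffSum (hf : Integrable f μ) (hT : MeasurePreserving T μ μ)
    (n : ℕ) :
    Integrable (birkhoffSum T f n) μ :=
  integrable_finsetSum _ fun i _ => (hT.iterate i).integrable_comp_of_integrable hf

theorem Measurable.partialSups {f : ℕ → X → ℝ} (hf : ∀ n, Measurable (f n)) (N : ℕ) :
    Measurable (partialSups f N) := by
  induction N with
  | zero => simpa using hf 0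
  | succ N ih => rw [← Order.succ_eq_add_one, partialSups_succ]; exact ih.sup (hf _)

theorem MeasureTheory.Integrable.partialSups {f : ℕ → X → ℝ} (hf : ∀ n, Integrable (f n) μ)
    (N : ℕ) :
    Integrable (partialSups f N) μ := by
  induction N with
  | zero => simpa using hf 0
  | succ N ih => rw [← Order.succ_eq_add_one, partialSups_succ]; exact ih.sup (hf _)

theorem ae_forall_birkhoffAverage_eq {f' : X → ℝ} (hT : Measure.QuasiMeasurePreserving T μ μ)
    (h : f =ᵐ[μ] f') : ∀ᵐ x ∂μ, ∀ n, birkhoffAverage ℝ T f n x = birkhoffAverage ℝ T f' n x :=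
  ae_all_iff.2 fun n => hT.birkhoffAverage_ae_eq_of_ae_eq ℝ h n

end BirkhoffSum

section MaximalErgodic

variable {X : Type*} {T : X → X} {f : X → ℝ}

theorem partialSups_birkhoffSum_nonneg (T : X → X) (f : X → ℝ) (N : ℕ) (x : X) :
    0 ≤ partialSups (birkhoffSum T f) N x := by
  simpa using le_partialSups_of_le (birkhoffSum T f) N.zero_le x

theorem partialSups_birkhoffSum_le_add {N : ℕ} {x : X}
    (hx : 0 < partialSups (birkhoffSum T f) N x) :
    partialSups (birkhoffSum T f) N x ≤ f x + partialSups (birkhoffSum T f) N (T x) := by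
  rw [Pi.partialSups_apply] at hx ⊢
  obtain ⟨n, hnN, hn⟩ := exists_partialSups_eq (fun n => birkhoffSum T f n x) N
  rw [hn] at hx ⊢
  obtain _ | m := n
  · simp at hx
  rw [birkhoffSum_succ', add_le_add_iff_left, Pi.partialSups_apply]
  exact le_partialSups_of_le (fun n => birkhoffSum T f n (T x)) (by omega)

variable [MeasurableSpace X] {μ : Measure X}

theorem setIntegral_nonneg_of_partialSups_birkhoffSum_pos [IsFiniteMeasure μ]
    (hT : MeasurePreserving T μ μ) (hfm : Measurable f) (hf : Integrable f μ) (N : ℕ) :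
    0 ≤ ∫ x in {x | 0 < partialSups (birkhoffSum T f) N x}, f x ∂μ := by
  set M := partialSups (birkhoffSum T f) N
  set E := {x | 0 < M x}
  have hMm : Measurable M := Measurable.partialSups (fun n => hfm.birkhoffSum hT.measurable n) N
  have hM : Integrable M μ := Integrable.partialSups (fun n => hf.birkhoffSum hT n) N
  have hE : MeasurableSet E := measurableSet_lt measurable_const hMm
  -- Off `E`, `M = 0 ≤ M ∘ T`; on `E`, `M ≤ f + M ∘ T`.
  have hle : ∀ x, M x - M (T x) ≤ E.indicator f x := by
    intro x
    by_cases hx : x ∈ E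
    · rw [Set.indicator_of_mem hx]
      linarith [partialSups_birkhoffSum_le_add hx]
    · rw [Set.indicator_of_notMem hx]
      have := partialSups_birkhoffSum_nonneg T f N (T x)
      simp only [E, Set.mem_ofPred_eq, not_lt] at hx
      linarith
  have hMT : Integrable (fun x => M (T x)) μ := hT.integrable_comp_of_integrable hM
  have hMT_eq : ∫ x, M (T x) ∂μ = ∫ x, M x ∂μ := by
    rw [← integral_map hT.aemeasurable hMm.aestronglyMeasurable, hT.map_eq]
  calc 0 = ∫ x, (M x - M (T x)) ∂μ := by rw [integral_sub hM hMT, hMT_eq, sub_self]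
    _ ≤ ∫ x, E.indicator f x ∂μ := integral_mono (hM.sub hMT) (hf.indicator hE) hle
    _ = ∫ x in E, f x ∂μ := integral_indicator hE

theorem integral_nonneg_of_ae_exists_birkhoffSum_pos [IsFiniteMeasure μ]
    (hT : MeasurePreserving T μ μ) (hfm : Measurable f) (hf : Integrable f μ)
    (h : ∀ᵐ x ∂μ, ∃ n, 0 < birkhoffSum T f n x) : 0 ≤ ∫ x, f x ∂μ := by
  set E : ℕ → Set X := fun N => {x | 0 < partialSups (birkhoffSum T f) N x}
  have hEm (N : ℕ) : MeasurableSet (E N) := measurableSet_lt measurable_const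
    (Measurable.partialSups (fun n => hfm.birkhoffSum hT.measurable n) N)
  have hmono : Monotone E := fun N N' hN x hx =>
    hx.trans_le (partialSups_monotone (birkhoffSum T f) hN x)
  have hfull : μ.restrict (⋃ N, E N) = μ := by
    refine Measure.restrict_eq_self_of_ae_mem ?_
    filter_upwards [h] with x ⟨n, hn⟩
    exact Set.mem_iUnion.2 ⟨n, hn.trans_le (le_partialSups (birkhoffSum T f) n x)⟩
  have hlim := tendsto_setIntegral_of_monotone hEm hmono hf.integrableOn
  rw [hfull] at hlim
  exact ge_of_tendsto' hlim fun N => setIntegral_nonneg_of_partialSups_birkhoffSum_pos hT hfm hf N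

theorem mul_measureReal_le_setIntegral_of_exists [IsFiniteMeasure μ] (hT : MeasurePreserving T μ μ)
    (hfm : Measurable f) (hf : Integrable f μ) {E : Set X} (hE : MeasurableSet E)
    (hTE : T ⁻¹' E = E) {β : ℝ} (hβ : ∀ x ∈ E, ∃ n : ℕ, n * β < birkhoffSum T f n x) :
    β * μ.real E ≤ ∫ x in E, f x ∂μ := by
  have hTE' : MeasurePreserving T (μ.restrict E) (μ.restrict E) := by
    simpa only [hTE] using hT.restrict_preimage hE
  have h := integral_nonneg_of_ae_exists_birkhoffSum_pos hTE' (hfm.sub_const β)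
    (hf.integrableOn.sub (integrable_const β)) <| (ae_restrict_iff' hE).2 <|
      Eventually.of_forall fun x hx => by
        simpa only [birkhoffSum_sub_const, sub_pos] using hβ x hx
  rw [integral_sub hf.integrableOn (integrable_const β), setIntegral_const, smul_eq_mul] at h
  linarith

end MaximalErgodic

theorem EReal.limsup_coe_le_limsup_coe_of_eventually_eq {ι : Type*} {l : Filter ι}
    {u v s t : ι → ℝ} (hs : Tendsto s l (𝓝 1)) (ht : Tendsto t l (𝓝 0))
    (h : ∀ᶠ i in l, v i = s i * u i + t i) :
    limsup (fun i => (u i : EReal)) l ≤ limsup (fun i => (v i : EReal)) l := by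
  refine le_of_forall_lt_imp_le_of_dense fun z hz => ?_
  obtain ⟨a, hza, ha⟩ := EReal.lt_iff_exists_real_btwn.1 hz
  obtain ⟨b, hab, hb⟩ := EReal.lt_iff_exists_real_btwn.1 ha
  have hfreq : ∃ᶠ i in l, b < u i := by
    simpa only [EReal.coe_lt_coe_iff] using frequently_lt_of_lt_limsup (by isBoundedDefault) hb
  have hlim : Tendsto (fun i => s i * b + t i) l (𝓝 b) := by
    simpa using (hs.mul_const b).add ht
  have hev : ∀ᶠ i in l, a < s i * b + t i ∧ 0 < s i :=
    (hlim.eventually (lt_mem_nhds (EReal.coe_lt_coe_iff.1 hab))).and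
      (hs.eventually (lt_mem_nhds one_pos))
  refine hza.le.trans (le_limsup_of_frequently_le ?_ (by isBoundedDefault))
  refine (hfreq.and_eventually (hev.and h)).mono fun i ⟨hbi, ⟨hai, hsi⟩, hvi⟩ => ?_
  rw [hvi, EReal.coe_le_coe_iff]
  nlinarith

section BirkhoffLimsup

variable {X : Type*} {T : X → X} {f : X → ℝ}

-- Taken in `EReal`, so that it is exactly `T`-invariant with no boundedness assumption.
noncomputable def birkhoffLimsup (T : X → X) (f : X → ℝ) (x : X) : EReal :=
  limsup (fun n => ((birkhoffAverage ℝ T f n x : ℝ) : EReal)) atTop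

theorem birkhoffLimsup_map_apply (T : X → X) (f : X → ℝ) (x : X) :
    birkhoffLimsup T f (T x) = birkhoffLimsup T f x := by
  have hsucc (n : ℕ) : birkhoffAverage ℝ T f (n + 1) x =
      (f x + n * birkhoffAverage ℝ T f n (T x)) / (n + 1) := by
    rcases n.eq_zero_or_pos with rfl | hn
    · simp [birkhoffAverage_eq_birkhoffSum_div]
    · simp only [birkhoffAverage_eq_birkhoffSum_div, birkhoffSum_succ']
      field_simp
      push_cast
      ring
  unfold birkhoffLimsup
  conv_rhs => rw [← limsup_nat_add _ 1]
  apply le_antisymm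
  · refine EReal.limsup_coe_le_limsup_coe_of_eventually_eq (s := fun n : ℕ => (n : ℝ) / (n + 1))
      (t := fun n : ℕ => f x / (n + 1)) (tendsto_natCast_div_add_atTop 1)
      (tendsto_const_nhds.div_atTop (tendsto_natCast_atTop_atTop.atTop_add tendsto_const_nhds))
      (Eventually.of_forall fun n => ?_)
    rw [hsucc]
    ring
  · refine EReal.limsup_coe_le_limsup_coe_of_eventually_eq (s := fun n : ℕ => 1 + 1 / (n : ℝ))
      (t := fun n : ℕ => -f x / n)
      (by simpa using tendsto_one_div_atTop_nhds_zero_nat.const_add (1 : ℝ))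
      (tendsto_const_div_atTop_nhds_zero_nat _) ((eventually_gt_atTop 0).mono fun n hn => ?_)
    rw [hsucc]
    field_simp
    ring

theorem birkhoffLimsup_eq_of_tendsto {x : X} {r : ℝ}
    (h : Tendsto (fun n => birkhoffAverage ℝ T f n x) atTop (𝓝 r)) : birkhoffLimsup T f x = r :=
  (EReal.tendsto_coe.2 h).limsup_eq

theorem exists_birkhoffSum_gt_of_lt_birkhoffLimsup {β : ℝ} {x : X}
    (h : (β : EReal) < birkhoffLimsup T f x) : ∃ n : ℕ, n * β < birkhoffSum T f n x := by
  obtain ⟨n, hn, hn0⟩ :=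
    ((frequently_lt_of_lt_limsup (by isBoundedDefault) h).and_eventually
      (eventually_gt_atTop 0)).exists
  rw [EReal.coe_lt_coe_iff, birkhoffAverage_eq_birkhoffSum_div,
    lt_div_iff₀ (by positivity)] at hn
  exact ⟨n, by linarith⟩

variable [MeasurableSpace X] {μ : Measure X}

theorem Measurable.birkhoffLimsup (hf : Measurable f) (hT : Measurable T) :
    Measurable (birkhoffLimsup T f) :=
  Measurable.limsup fun n => (hf.birkhoffAverage hT n).coe_real_ereal

theorem mul_measureReal_le_setIntegral [IsFiniteMeasure μ] (hT : MeasurePreserving T μ μ)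
    (hfm : Measurable f) (hf : Integrable f μ) {E : Set X} (hE : MeasurableSet E)
    (hTE : T ⁻¹' E = E) {β : ℝ} (hβ : ∀ x ∈ E, (β : EReal) < birkhoffLimsup T f x) :
    β * μ.real E ≤ ∫ x in E, f x ∂μ :=
  mul_measureReal_le_setIntegral_of_exists hT hfm hf hE hTE fun x hx =>
    exists_birkhoffSum_gt_of_lt_birkhoffLimsup (hβ x hx)

theorem ae_birkhoffLimsup_lt_top [IsFiniteMeasure μ] (hT : MeasurePreserving T μ μ)
    (hfm : Measurable f) (hf : Integrable f μ) : ∀ᵐ x ∂μ, birkhoffLimsup T f x < ⊤ := by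
  set E := {x | birkhoffLimsup T f x = ⊤}
  have hE : MeasurableSet E := hfm.birkhoffLimsup hT.measurable (measurableSet_singleton ⊤)
  have hTE : T ⁻¹' E = E := by ext x; simp [E, birkhoffLimsup_map_apply]
  have hβ (β : ℝ) : β * μ.real E ≤ ∫ x in E, f x ∂μ :=
    mul_measureReal_le_setIntegral hT hfm hf hE hTE fun x hx => by
      simp only [E, Set.mem_ofPred_eq] at hx
      simp [hx]
  have h0 : μ.real E = 0 := by
    by_contra hne
    have := hβ ((∫ x in E, f x ∂μ + 1) / μ.real E)
    rw [div_mul_cancel₀ _ hne] at this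
    linarith
  rw [measureReal_eq_zero_iff] at h0
  simpa [ae_iff, E] using h0

theorem ae_not_lt_birkhoffLimsup_and_lt_birkhoffLimsup_neg [IsFiniteMeasure μ]
    (hT : MeasurePreserving T μ μ) (hfm : Measurable f) (hf : Integrable f μ) {a b : ℝ}
    (hab : 0 < a + b) :
    ∀ᵐ x ∂μ, ¬ ((a : EReal) < birkhoffLimsup T f x ∧ (b : EReal) < birkhoffLimsup T (-f) x) := by
  set E := {x | (a : EReal) < birkhoffLimsup T f x ∧ (b : EReal) < birkhoffLimsup T (-f) x}
  have hE : MeasurableSet E :=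
    (measurableSet_lt measurable_const (hfm.birkhoffLimsup hT.measurable)).inter
      (measurableSet_lt measurable_const (hfm.neg.birkhoffLimsup hT.measurable))
  have hTE : T ⁻¹' E = E := by ext x; simp [E, birkhoffLimsup_map_apply]
  have ha := mul_measureReal_le_setIntegral hT hfm hf hE hTE fun x hx => hx.1
  have hb := mul_measureReal_le_setIntegral hT hfm.neg hf.neg hE hTE fun x hx => hx.2
  simp only [Pi.neg_apply, integral_neg] at hb
  have h0 : μ.real E = 0 := le_antisymm (by nlinarith [measureReal_nonneg (μ := μ) (s := E)])
    measureReal_nonneg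
  rw [measureReal_eq_zero_iff] at h0
  simpa [ae_iff, E] using h0

theorem ae_tendsto_birkhoffAverage_birkhoffLimsup [IsFiniteMeasure μ]
    (hT : MeasurePreserving T μ μ) (hfm : Measurable f) (hf : Integrable f μ) :
    ∀ᵐ x ∂μ, Tendsto (fun n => birkhoffAverage ℝ T f n x) atTop
      (𝓝 (birkhoffLimsup T f x).toReal) := by
  have hosc : ∀ᵐ x ∂μ, ∀ a b : ℚ, 0 < (a : ℝ) + b →
      ¬ (((a : ℝ) : EReal) < birkhoffLimsup T f x ∧ ((b : ℝ) : EReal) < birkhoffLimsup T (-f) x) :=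
    ae_all_iff.2 fun a => ae_all_iff.2 fun b => by
      by_cases hab : 0 < (a : ℝ) + b
      · filter_upwards [ae_not_lt_birkhoffLimsup_and_lt_birkhoffLimsup_neg hT hfm hf hab]
          with x hx _ using hx
      · exact Eventually.of_forall fun x h => absurd h hab
  filter_upwards [ae_birkhoffLimsup_lt_top hT hfm hf, ae_birkhoffLimsup_lt_top hT hfm.neg hf.neg,
    hosc] with x htop hneg_top hx
  set u := fun n => ((birkhoffAverage ℝ T f n x : ℝ) : EReal)
  have hliminf : liminf u atTop = -birkhoffLimsup T (-f) x := by
    rw [birkhoffLimsup, ← EReal.liminf_neg]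
    congr 1
    ext n
    simp [u, birkhoffAverage_neg]
  have hle : birkhoffLimsup T f x ≤ -birkhoffLimsup T (-f) x := by
    by_contra! hlt
    obtain ⟨a, ha, ha'⟩ := EReal.exists_rat_btwn_of_lt hlt
    obtain ⟨b, hb, hb'⟩ := EReal.exists_rat_btwn_of_lt (EReal.neg_lt_comm.1 ha)
    refine hx a b ?_ ⟨ha', hb'⟩
    rw [← EReal.coe_neg, EReal.coe_lt_coe_iff] at hb
    linarith
  have heq : liminf u atTop = birkhoffLimsup T f x :=
    le_antisymm (liminf_le_limsup (by isBoundedDefault) (by isBoundedDefault)) (hliminf ▸ hle)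
  have hbot : birkhoffLimsup T f x ≠ ⊥ := by
    rw [← heq, hliminf]
    simpa using hneg_top.ne
  rw [← EReal.tendsto_coe, EReal.coe_toReal htop.ne hbot]
  exact tendsto_of_liminf_eq_limsup heq rfl

theorem ae_birkhoffLimsup_le_integral [IsProbabilityMeasure μ] (hErg : Ergodic T μ)
    (hfm : Measurable f) (hf : Integrable f μ) :
    ∀ᵐ x ∂μ, birkhoffLimsup T f x ≤ (∫ y, f y ∂μ : ℝ) := by
  have hq : ∀ᵐ x ∂μ, ∀ q : ℚ, (∫ y, f y ∂μ) < q → ¬ ((q : ℝ) : EReal) < birkhoffLimsup T f x :=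
    ae_all_iff.2 fun q => by
      set E := {x | ((q : ℝ) : EReal) < birkhoffLimsup T f x}
      have hE : MeasurableSet E :=
        measurableSet_lt measurable_const (hfm.birkhoffLimsup hErg.measurable)
      have hTE : T ⁻¹' E = E := by ext x; simp [E, birkhoffLimsup_map_apply]
      rcases hErg.toPreErgodic.ae_empty_or_univ hE hTE with hE0 | hE1
      · filter_upwards [measure_eq_zero_iff_ae_notMem.1 (ae_eq_empty.1 hE0)] with x hx _ using hx
      · have := mul_measureReal_le_setIntegral hErg.toMeasurePreserving hfm hf hE hTE
          fun x hx => hx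
        rw [Measure.restrict_congr_set hE1, Measure.restrict_univ, measureReal_congr hE1,
          probReal_univ, mul_one] at this
        exact Eventually.of_forall fun x hlt => absurd hlt this.not_gt
  filter_upwards [hq] with x hx
  by_contra! hlt
  obtain ⟨q, hq, hq'⟩ := EReal.exists_rat_btwn_of_lt hlt
  exact hx q (EReal.coe_lt_coe_iff.1 hq) hq'

end BirkhoffLimsup

section Birkhoff

variable {X : Type*} [MeasurableSpace X] {μ : Measure X} {T : X → X} {f : X → ℝ}

theorem ae_tendsto_birkhoffAverage [IsFiniteMeasure μ] (hT : MeasurePreserving T μ μ)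
    (hf : Integrable f μ) :
    ∀ᵐ x ∂μ, ∃ L, Tendsto (fun n => birkhoffAverage ℝ T f n x) atTop (𝓝 L) := by
  set f' := hf.aemeasurable.mk f
  have hf' : Integrable f' μ := hf.congr hf.aemeasurable.ae_eq_mk
  filter_upwards [ae_tendsto_birkhoffAverage_birkhoffLimsup hT hf.aemeasurable.measurable_mk hf',
    ae_forall_birkhoffAverage_eq hT.quasiMeasurePreserving hf.aemeasurable.ae_eq_mk] with x hx heq
  simp only [heq]
  exact ⟨_, hx⟩

theorem ae_tendsto_birkhoffAverage_integral [IsProbabilityMeasure μ] (hErg : Ergodic T μ)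
    (hf : Integrable f μ) :
    ∀ᵐ x ∂μ, Tendsto (fun n => birkhoffAverage ℝ T f n x) atTop (𝓝 (∫ y, f y ∂μ)) := by
  have hT := hErg.toMeasurePreserving
  set f' := hf.aemeasurable.mk f
  have hf'm : Measurable f' := hf.aemeasurable.measurable_mk
  have hf' : Integrable f' μ := hf.congr hf.aemeasurable.ae_eq_mk
  filter_upwards [ae_tendsto_birkhoffAverage_birkhoffLimsup hT hf'm hf',
    ae_birkhoffLimsup_le_integral hErg hf'm hf',
    ae_birkhoffLimsup_le_integral hErg hf'm.neg hf'.neg,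
    ae_forall_birkhoffAverage_eq hT.quasiMeasurePreserving hf.aemeasurable.ae_eq_mk]
    with x hx hle hle_neg heq
  set r := (birkhoffLimsup T f' x).toReal
  have hx_neg : Tendsto (fun n => birkhoffAverage ℝ T (-f') n x) atTop (𝓝 (-r)) := by
    simpa [birkhoffAverage_neg] using hx.neg
  rw [birkhoffLimsup_eq_of_tendsto hx, EReal.coe_le_coe_iff] at hle
  rw [birkhoffLimsup_eq_of_tendsto hx_neg, EReal.coe_le_coe_iff, Pi.neg_def,
    integral_neg] at hle_neg
  rw [integral_congr_ae hf.aemeasurable.ae_eq_mk, ← le_antisymm hle (by linarith)]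
  simpa only [heq] using hx

end Birkhoff

theorem tendsto_sub_tsub_div_of_tendsto_div {a : ℕ → ℝ} {L : ℝ}
    (h : Tendsto (fun n => a n / n) atTop (𝓝 L)) (N : ℕ) :
    Tendsto (fun n => (a n - a (n - N)) / n) atTop (𝓝 0) := by
  have hshift : Tendsto (fun n => a (n - N) / (n - N : ℕ)) atTop (𝓝 L) :=
    h.comp (tendsto_sub_atTop_nat N)
  have hratio : Tendsto (fun n : ℕ => ((n - N : ℕ) : ℝ) / n) atTop (𝓝 1) := by
    have : Tendsto (fun n : ℕ => 1 - (N : ℝ) / n) atTop (𝓝 1) := by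
      simpa using (tendsto_const_div_atTop_nhds_zero_nat (N : ℝ)).const_sub (1 : ℝ)
    refine this.congr' ((eventually_gt_atTop N).mono fun n hn => ?_)
    beta_reduce
    rw [Nat.cast_sub hn.le, sub_div, div_self (Nat.cast_pos.2 (N.zero_le.trans_lt hn)).ne']
  have hlim := h.sub (hshift.mul hratio)
  rw [mul_one, sub_self] at hlim
  refine hlim.congr' ((eventually_gt_atTop N).mono fun n hn => ?_)
  have : ((n - N : ℕ) : ℝ) ≠ 0 := by rw [Nat.cast_ne_zero]; omega
  field_simp

section Maker

variable {X : Type*} {T : X → X}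

noncomputable def makerAverage (T : X → X) (g : ℕ → X → ℝ) (n : ℕ) (x : X) : ℝ :=
  (∑ i ∈ range n, g (n - i) (T^[i] x)) / n

noncomputable def tailDeviation (g : ℕ → X → ℝ) (glim : X → ℝ) (N : ℕ) (x : X) : ℝ :=
  ⨆ k, |g (N + k) x - glim x|

variable {g : ℕ → X → ℝ} {glim : X → ℝ}

theorem tailDeviation_nonneg (N : ℕ) (x : X) : 0 ≤ tailDeviation g glim N x :=
  Real.iSup_nonneg fun _ => abs_nonneg _

theorem tailDeviation_le {x : X} {c : ℝ} {N : ℕ} (h : ∀ m, N ≤ m → |g m x - glim x| ≤ c) :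
    tailDeviation g glim N x ≤ c :=
  ciSup_le fun k => h _ (Nat.le_add_right N k)

theorem abs_sub_le_tailDeviation {x : X} (hbdd : BddAbove (Set.range fun m => |g m x - glim x|))
    {N m : ℕ} (h : N ≤ m) : |g m x - glim x| ≤ tailDeviation g glim N x := by
  obtain ⟨k, rfl⟩ := Nat.exists_eq_add_of_le h
  exact le_ciSup (hbdd.mono (by rintro _ ⟨k, rfl⟩; exact ⟨N + k, rfl⟩)) k

theorem tendsto_tailDeviation {x : X} (h : Tendsto (fun n => g n x) atTop (𝓝 (glim x))) :
    Tendsto (fun N => tailDeviation g glim N x) atTop (𝓝 0) := by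
  refine Metric.tendsto_atTop.2 fun ε hε => ?_
  obtain ⟨M, hM⟩ := Metric.tendsto_atTop.1 h (ε / 2) (half_pos hε)
  refine ⟨M, fun N hN => ?_⟩
  rw [Real.dist_eq, sub_zero, abs_of_nonneg (tailDeviation_nonneg N x)]
  refine (tailDeviation_le fun m hm => ?_).trans_lt (half_lt_self hε)
  exact (Real.dist_eq _ _ ▸ hM m (hN.trans hm)).le

theorem abs_sum_sub_le_birkhoffSum {H : ℕ → X → ℝ}
    (hH : ∀ N m y, N ≤ m → |g m y - glim y| ≤ H N y) {N n : ℕ} (hNn : N ≤ n) (x : X) :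
    |∑ i ∈ range n, (g (n - i) (T^[i] x) - glim (T^[i] x))| ≤
      birkhoffSum T (H N) n x + (birkhoffSum T (H 0) n x - birkhoffSum T (H 0) (n - N) x) := by
  have hH0 (y : X) : 0 ≤ H N y := (abs_nonneg _).trans (hH N N y le_rfl)
  calc |∑ i ∈ range n, (g (n - i) (T^[i] x) - glim (T^[i] x))|
      ≤ ∑ i ∈ range n, |g (n - i) (T^[i] x) - glim (T^[i] x)| := abs_sum_le_sum_abs _ _
    _ = ∑ i ∈ range (n - N), |g (n - i) (T^[i] x) - glim (T^[i] x)| +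
          ∑ i ∈ Ico (n - N) n, |g (n - i) (T^[i] x) - glim (T^[i] x)| :=
        (sum_range_add_sum_Ico _ (Nat.sub_le n N)).symm
    _ ≤ ∑ i ∈ range (n - N), H N (T^[i] x) + ∑ i ∈ Ico (n - N) n, H 0 (T^[i] x) :=
        add_le_add (sum_le_sum fun i hi => hH _ _ _ (by rw [mem_range] at hi; omega))
          (sum_le_sum fun i _ => hH _ _ _ (Nat.zero_le _))
    _ ≤ birkhoffSum T (H N) n x + (birkhoffSum T (H 0) n x - birkhoffSum T (H 0) (n - N) x) := by
        rw [sum_Ico_eq_sub _ (Nat.sub_le n N)]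
        exact add_le_add (sum_le_sum_of_subset_of_nonneg (range_subset_range.2 (Nat.sub_le n N))
          fun i _ _ => hH0 _) le_rfl

theorem tendsto_makerAverage_sub_birkhoffAverage {H : ℕ → X → ℝ} {x : X} {L : ℝ}
    (hH : ∀ N m y, N ≤ m → |g m y - glim y| ≤ H N y)
    (h0 : Tendsto (fun n => birkhoffAverage ℝ T (H 0) n x) atTop (𝓝 L))
    (hsmall : ∀ ε > 0, ∃ N, ∀ᶠ n in atTop, birkhoffAverage ℝ T (H N) n x < ε) :
    Tendsto (fun n => makerAverage T g n x - birkhoffAverage ℝ T glim n x) atTop (𝓝 0) := by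
  refine Metric.tendsto_nhds.2 fun ε hε => ?_
  obtain ⟨N, hN⟩ := hsmall (ε / 2) (half_pos hε)
  have htail := tendsto_sub_tsub_div_of_tendsto_div (a := fun n => birkhoffSum T (H 0) n x)
    (by simpa only [birkhoffAverage_eq_birkhoffSum_div] using h0) N
  filter_upwards [hN, htail.eventually (gt_mem_nhds (half_pos hε)),
    eventually_ge_atTop (max N 1)] with n hAn htn hn
  have hn0 : (0 : ℝ) < n := by exact_mod_cast (le_max_right N 1).trans hn
  have := abs_sum_sub_le_birkhoffSum (T := T) hH ((le_max_left N 1).trans hn) x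
  rw [birkhoffAverage_eq_birkhoffSum_div, div_lt_iff₀ hn0] at hAn
  rw [div_lt_iff₀ hn0] at htn
  rw [Real.dist_eq, sub_zero, makerAverage, birkhoffAverage_eq_birkhoffSum_div, birkhoffSum,
    ← sub_div, ← sum_sub_distrib, abs_div, abs_of_pos hn0, div_lt_iff₀ hn0]
  linarith

variable [MeasurableSpace X] {μ : Measure X}

theorem AEMeasurable.tailDeviation (hg : ∀ n, AEMeasurable (g n) μ) (hglim : AEMeasurable glim μ)
    (N : ℕ) : AEMeasurable (tailDeviation g glim N) μ :=
  AEMeasurable.iSup fun _ => ((hg _).sub hglim).abs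

theorem ae_exists_birkhoffLimsup_lt [IsFiniteMeasure μ] (hT : MeasurePreserving T μ μ)
    {f : ℕ → X → ℝ} (hfm : ∀ N, Measurable (f N)) (hf : ∀ N, Integrable (f N) μ)
    (hlim : Tendsto (fun N => ∫ x, |f N x| ∂μ) atTop (𝓝 0)) :
    ∀ᵐ x ∂μ, ∀ ε : ℝ, 0 < ε → ∃ N, birkhoffLimsup T (f N) x < ε := by
  have hk : ∀ᵐ x ∂μ, ∀ k : ℕ, ∃ N, birkhoffLimsup T (f N) x ≤ ((1 / (k + 1) : ℝ) : EReal) :=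
    ae_all_iff.2 fun k => by
      set β : ℝ := 1 / (k + 1)
      set E := {x | ∀ N, (β : EReal) < birkhoffLimsup T (f N) x}
      have hE : MeasurableSet E := by
        simp only [E, Set.ofPred_forall]
        exact MeasurableSet.iInter fun N =>
          measurableSet_lt measurable_const ((hfm N).birkhoffLimsup hT.measurable)
      have hTE : T ⁻¹' E = E := by ext x; simp [E, birkhoffLimsup_map_apply]
      have hle (N : ℕ) : β * μ.real E ≤ ∫ x, |f N x| ∂μ :=
        calc β * μ.real E ≤ ∫ x in E, f N x ∂μ :=
              mul_measureReal_le_setIntegral hT (hfm N) (hf N) hE hTE fun x hx => hx N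
          _ ≤ ∫ x in E, |f N x| ∂μ :=
              setIntegral_mono (hf N).integrableOn (hf N).abs.integrableOn fun x => le_abs_self _
          _ ≤ ∫ x, |f N x| ∂μ :=
              setIntegral_le_integral (hf N).abs (Eventually.of_forall fun x => abs_nonneg _)
      have h0 : μ.real E = 0 := le_antisymm
        (nonpos_of_mul_nonpos_right (ge_of_tendsto' hlim hle) (by positivity)) measureReal_nonneg
      rw [measureReal_eq_zero_iff] at h0
      filter_upwards [measure_eq_zero_iff_ae_notMem.1 h0] with x hx
      simpa [E] using hx
  filter_upwards [hk] with x hx ε hε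
  obtain ⟨k, hk⟩ := exists_nat_one_div_lt hε
  obtain ⟨N, hN⟩ := hx k
  exact ⟨N, hN.trans_lt (EReal.coe_lt_coe_iff.2 hk)⟩

theorem ae_exists_eventually_birkhoffAverage_lt [IsFiniteMeasure μ]
    (hT : MeasurePreserving T μ μ) {f : ℕ → X → ℝ} (hf : ∀ N, Integrable (f N) μ)
    (hlim : Tendsto (fun N => ∫ x, |f N x| ∂μ) atTop (𝓝 0)) :
    ∀ᵐ x ∂μ, ∀ ε > 0, ∃ N, ∀ᶠ n in atTop, birkhoffAverage ℝ T (f N) n x < ε := by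
  set f' := fun N => (hf N).aemeasurable.mk (f N)
  have hff' (N : ℕ) : f N =ᵐ[μ] f' N := (hf N).aemeasurable.ae_eq_mk
  have hlim' : Tendsto (fun N => ∫ x, |f' N x| ∂μ) atTop (𝓝 0) :=
    hlim.congr fun N => integral_congr_ae ((hff' N).fun_comp abs)
  filter_upwards [ae_exists_birkhoffLimsup_lt hT (fun N => (hf N).aemeasurable.measurable_mk)
      (fun N => (hf N).congr (hff' N)) hlim',
    ae_all_iff.2 fun N => ae_forall_birkhoffAverage_eq hT.quasiMeasurePreserving (hff' N)]
    with x hx heq ε hε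
  obtain ⟨N, hN⟩ := hx ε hε
  refine ⟨N, (eventually_lt_of_limsup_lt hN (by isBoundedDefault)).mono fun n hn => ?_⟩
  rw [heq N n]
  exact_mod_cast hn

theorem ae_tendsto_makerAverage_sub_birkhoffAverage [IsFiniteMeasure μ]
    (hT : MeasurePreserving T μ μ) {G : X → ℝ} (hg : ∀ n, AEMeasurable (g n) μ)
    (hglim : Integrable glim μ) (hconv : ∀ᵐ x ∂μ, Tendsto (fun n => g n x) atTop (𝓝 (glim x)))
    (hG : Integrable G μ) (hdom : ∀ n x, |g n x| ≤ G x) :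
    ∀ᵐ x ∂μ, Tendsto (fun n => makerAverage T g n x - birkhoffAverage ℝ T glim n x) atTop
      (𝓝 0) := by
  set H := tailDeviation g glim
  have hbound (m : ℕ) (x : X) : |g m x - glim x| ≤ G x + |glim x| :=
    (abs_sub _ _).trans (by linarith [hdom m x])
  have hH (N m : ℕ) (y : X) (h : N ≤ m) : |g m y - glim y| ≤ H N y :=
    abs_sub_le_tailDeviation ⟨G y + |glim y|, Set.forall_mem_range.2 fun m => hbound m y⟩ h
  have hHle (N : ℕ) (x : X) : ‖|H N x|‖ ≤ G x + |glim x| := by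
    rw [Real.norm_eq_abs, abs_abs, abs_of_nonneg (tailDeviation_nonneg N x)]
    exact tailDeviation_le fun m _ => hbound m x
  have hHint (N : ℕ) : Integrable (H N) μ :=
    (hG.add hglim.abs).mono'
      (AEMeasurable.tailDeviation hg hglim.aemeasurable N).aestronglyMeasurable
      (Eventually.of_forall fun x => by simpa using hHle N x)
  have hHlim : Tendsto (fun N => ∫ x, |H N x| ∂μ) atTop (𝓝 0) := by
    simpa using tendsto_integral_of_dominated_convergence _
      (fun N => (hHint N).abs.aestronglyMeasurable) (hG.add hglim.abs)
      (fun N => Eventually.of_forall (hHle N))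
      (hconv.mono fun x hx => (tendsto_tailDeviation hx).abs)
  filter_upwards [ae_tendsto_birkhoffAverage hT (hHint 0),
    ae_exists_eventually_birkhoffAverage_lt hT hHint hHlim] with x ⟨L, hL⟩ hsmall
  exact tendsto_makerAverage_sub_birkhoffAverage hH hL hsmall

end Maker

/-- Maker's ergodic theorem: if `g_n → g_∞` a.e. and `sup_n |g_n|` is dominated by an
integrable function, then a.e. the averages `(1/n) ∑_{k<n} g_{n−k}(T^k x)` converge to the
same limit as the Birkhoff averages of `g_∞`; if moreover `T` is ergodic, this limit is
`∫ g_∞ dℙ` a.e. -/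
theorem maker_ergodic_theorem {X : Type*} [MeasurableSpace X]
    (μ : Measure X) [IsProbabilityMeasure μ] (T : X → X)
    (hT : MeasurePreserving T μ μ)
    (g : ℕ → X → ℝ) (glim : X → ℝ)
    (hint : ∀ n, Integrable (g n) μ)
    (hconv : ∀ᵐ x ∂μ, Tendsto (fun n => g n x) atTop (𝓝 (glim x)))
    (G : X → ℝ) (hG : Integrable G μ) (hdom : ∀ n x, |g n x| ≤ G x) :
    (∀ᵐ x ∂μ, ∃ L : ℝ,
        Tendsto (fun n => (∑ i ∈ Finset.range n, glim (T^[i] x)) / n) atTop (𝓝 L) ∧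
        Tendsto (fun n => (∑ i ∈ Finset.range n, g (n - i) (T^[i] x)) / n) atTop (𝓝 L))
      ∧ (Ergodic T μ →
        ∀ᵐ x ∂μ, Tendsto (fun n => (∑ i ∈ Finset.range n, g (n - i) (T^[i] x)) / n)
          atTop (𝓝 (∫ x, glim x ∂μ))) := by
  have hglim : Integrable glim μ := by
    refine hG.mono' (aestronglyMeasurable_of_tendsto_ae atTop
      (fun n => (hint n).aestronglyMeasurable) hconv) ?_
    filter_upwards [hconv] with x hx
    exact le_of_tendsto hx.norm (Eventually.of_forall fun n => hdom n x)
  have hdiff := ae_tendsto_makerAverage_sub_birkhoffAverage hT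
    (fun n => (hint n).aemeasurable) hglim hconv hG hdom
  refine ⟨?_, fun hErg => ?_⟩
  · filter_upwards [ae_tendsto_birkhoffAverage hT hglim, hdiff] with x ⟨L, hL⟩ hx
    exact ⟨L, by simpa only [birkhoffAverage_eq_birkhoffSum_div, birkhoffSum] using hL,
      by simpa [makerAverage] using hx.add hL⟩
  · filter_upwards [ae_tendsto_birkhoffAverage_integral hErg hglim, hdiff] with x hL hx
    simpa [makerAverage] using hx.add hL
end

section
/- Let η^{(ω)} satisfy the dynamic self-similarity η^{(ω)} = ∑_{e} p_e · f_e η' where the sum is over words e of length m, each f_e is a contraction with ratio at least λ_min^m, and there exist two words u, v with dist(supp f_u η', supp f_v η') > 2ε and min weight p_min^m. Then for every x ∈ ℝ and r ∈ (0, ε], writing φ(r) = sup_x η(B(x,r)) for a measure η, one has φ^{(ω)}(r) ≤ (1 − p_min^m) · φ'(r / λ_min^m), where φ' corresponds to η'. -/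
open MeasureTheory

/-- One-step concentration estimate: if `η = ∑ₑ pₑ · fₑ η'` with affine contractions
`fₑ(x) = λₑ x + tₑ`, `λₑ ≥ c > 0`, and two of the pieces `f_u η'`, `f_v η'` have supports
at distance `> 2ε` and weights `≥ pm`, then for all `r ∈ (0, ε]`,
`η(B(x,r)) ≤ (1 − pm) · sup_y η'(B(y, r/c))`. -/
theorem concentration_step {E : Type*} [Fintype E]
    (lamE : E → ℝ) (tE : E → ℝ) (c : ℝ) (hc : 0 < c)
    (hlam : ∀ e, c ≤ lamE e) (hlam' : ∀ e, 0 < lamE e)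
    (pE : E → ℝ) (hpE : ∀ e, 0 < pE e) (hsum : ∑ e, pE e = 1)
    (pm : ℝ) (hpm : 0 < pm)
    (η η' : Measure ℝ) [IsProbabilityMeasure η'] [IsProbabilityMeasure η]
    (hη : η = ∑ e : E,
      ENNReal.ofReal (pE e) • Measure.map (fun x => lamE e * x + tE e) η')
    (u v : E) (huv : u ≠ v) (hpu : pm ≤ pE u) (hpv : pm ≤ pE v)
    (ε : ℝ) (hε : 0 < ε)
    (A B : Set ℝ)
    (hA : Measure.map (fun x => lamE u * x + tE u) η' Aᶜ = 0)
    (hB : Measure.map (fun x => lamE v * x + tE v) η' Bᶜ = 0)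
    (hsep : ∀ a ∈ A, ∀ b ∈ B, 2 * ε < |a - b|) :
    ∀ (x : ℝ) (r : ℝ), 0 < r → r ≤ ε →
      (η (Metric.closedBall x r)).toReal
        ≤ (1 - pm) * ⨆ y : ℝ, (η' (Metric.closedBall y (r / c))).toReal := by
  classical
  intro x r hr hrε
  set S := ⨆ y : ℝ, (η' (Metric.closedBall y (r / c))).toReal with hSdef
  have hS0 : 0 ≤ S := Real.iSup_nonneg fun y => ENNReal.toReal_nonneg
  have hbdd : BddAbove (Set.range fun y : ℝ => (η' (Metric.closedBall y (r / c))).toReal) := by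
    refine ⟨1, ?_⟩
    rintro _ ⟨y, rfl⟩
    have h1 : η' (Metric.closedBall y (r / c)) ≤ 1 := prob_le_one
    calc (η' (Metric.closedBall y (r / c))).toReal ≤ (1 : ENNReal).toReal :=
          ENNReal.toReal_mono ENNReal.one_ne_top h1
      _ = 1 := by simp
  -- key per-piece bound
  have key : ∀ e : E,
      ((Measure.map (fun z => lamE e * z + tE e) η') (Metric.closedBall x r)).toReal ≤ S := by
    intro e
    have hm : Measurable fun z : ℝ => lamE e * z + tE e := by fun_prop
    rw [Measure.map_apply hm measurableSet_closedBall]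
    have hl := hlam' e
    have hsub : (fun z : ℝ => lamE e * z + tE e) ⁻¹' Metric.closedBall x r ⊆
        Metric.closedBall ((x - tE e) / lamE e) (r / c) := by
      intro y hy
      simp only [Set.mem_preimage, Metric.mem_closedBall, Real.dist_eq] at hy ⊢
      have heq : y - (x - tE e) / lamE e = (lamE e * y + tE e - x) / lamE e := by
        field_simp
        ring
      rw [heq, abs_div, abs_of_pos hl]
      calc |lamE e * y + tE e - x| / lamE e ≤ r / lamE e := by gcongr
        _ ≤ r / c := by gcongr; exact hlam e
    calc (η' ((fun z : ℝ => lamE e * z + tE e) ⁻¹' Metric.closedBall x r)).toReal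
        ≤ (η' (Metric.closedBall ((x - tE e) / lamE e) (r / c))).toReal :=
          ENNReal.toReal_mono (measure_ne_top _ _) (measure_mono hsub)
      _ ≤ S := le_ciSup hbdd _
  -- the ball misses A or B
  have hdisj : Metric.closedBall x r ∩ A = ∅ ∨ Metric.closedBall x r ∩ B = ∅ := by
    by_contra h
    push_neg at h
    obtain ⟨a, haball, haA⟩ := h.1
    obtain ⟨b, hbball, hbB⟩ := h.2
    have hab := hsep a haA b hbB
    have h1 : |a - b| ≤ 2 * ε := by
      have h2 : |a - b| ≤ |a - x| + |x - b| := abs_sub_le a x b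
      have h3 : |a - x| ≤ r := by
        simpa [Real.dist_eq] using Metric.mem_closedBall.1 haball
      have h4 : |x - b| ≤ r := by
        have := Metric.mem_closedBall.1 hbball
        rw [Real.dist_eq] at this
        simpa [abs_sub_comm] using this
      linarith
    linarith
  -- pick the word whose piece vanishes on the ball
  obtain ⟨e₀, he₀p, he₀z⟩ : ∃ e₀ : E, pm ≤ pE e₀ ∧
      Measure.map (fun z => lamE e₀ * z + tE e₀) η' (Metric.closedBall x r) = 0 := by
    rcases hdisj with h | h
    · refine ⟨u, hpu, measure_mono_null ?_ hA⟩
      rw [Set.subset_compl_iff_disjoint_right]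
      exact Set.disjoint_iff_inter_eq_empty.2 h
    · refine ⟨v, hpv, measure_mono_null ?_ hB⟩
      rw [Set.subset_compl_iff_disjoint_right]
      exact Set.disjoint_iff_inter_eq_empty.2 h
  -- expand the measure of the ball
  have happ : η (Metric.closedBall x r) = ∑ e : E,
      ENNReal.ofReal (pE e) *
        Measure.map (fun z => lamE e * z + tE e) η' (Metric.closedBall x r) := by
    rw [hη]
    rw [Measure.finset_sum_apply]
    simp [Measure.smul_apply, smul_eq_mul]
  have hfin : ∀ e ∈ Finset.univ (α := E),
      ENNReal.ofReal (pE e) *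
        Measure.map (fun z => lamE e * z + tE e) η' (Metric.closedBall x r) ≠ ⊤ := by
    intro e _
    have hm : Measurable fun z : ℝ => lamE e * z + tE e := by fun_prop
    rw [Measure.map_apply hm measurableSet_closedBall]
    exact ENNReal.mul_ne_top ENNReal.ofReal_ne_top (measure_ne_top _ _)
  rw [happ, ENNReal.toReal_sum hfin]
  have hterm : ∀ e : E,
      (ENNReal.ofReal (pE e) *
        Measure.map (fun z => lamE e * z + tE e) η' (Metric.closedBall x r)).toReal
      = pE e * ((Measure.map (fun z => lamE e * z + tE e) η')
          (Metric.closedBall x r)).toReal := by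
    intro e
    rw [ENNReal.toReal_mul, ENNReal.toReal_ofReal (hpE e).le]
  have hsumerase : ∑ e ∈ Finset.univ.erase e₀, pE e = 1 - pE e₀ := by
    have := Finset.sum_erase_add Finset.univ pE (Finset.mem_univ e₀)
    linarith [hsum ▸ this]
  calc ∑ e : E, (ENNReal.ofReal (pE e) *
          Measure.map (fun z => lamE e * z + tE e) η' (Metric.closedBall x r)).toReal
      = (∑ e ∈ Finset.univ.erase e₀, (ENNReal.ofReal (pE e) *
          Measure.map (fun z => lamE e * z + tE e) η' (Metric.closedBall x r)).toReal)
        + (ENNReal.ofReal (pE e₀) *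
          Measure.map (fun z => lamE e₀ * z + tE e₀) η' (Metric.closedBall x r)).toReal := by
        rw [Finset.sum_erase_add _ _ (Finset.mem_univ e₀)]
    _ = ∑ e ∈ Finset.univ.erase e₀, (ENNReal.ofReal (pE e) *
          Measure.map (fun z => lamE e * z + tE e) η' (Metric.closedBall x r)).toReal := by
        rw [he₀z]; simp
    _ ≤ ∑ e ∈ Finset.univ.erase e₀, pE e * S := by
        refine Finset.sum_le_sum fun e _ => ?_
        rw [hterm e]
        exact mul_le_mul_of_nonneg_left (key e) (hpE e).le
    _ = (1 - pE e₀) * S := by rw [← Finset.sum_mul, hsumerase]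
    _ ≤ (1 - pm) * S := by
        apply mul_le_mul_of_nonneg_right _ hS0
        linarith
end

section
/- Let r, s ∈ ℕ, let Σ be a random homogeneous self-similar model over a finite alphabet I with contraction ratios λ_i and finitely supported translation distributions, and let Σ'' be the 'skip every s-th coordinate' model obtained by grouping coordinates into blocks of length s and deleting the last coordinate of each block, with uniform weights. Then the similarity dimension satisfies s-dim(Σ'') = (1 − 1/s) · s-dim(Σ), where s-dim(Σ) = (∫ ∑_j p_j^{(ω_1)} log p_j^{(ω_1)} dℙ(ω)) / (∫ log λ_{ω_1} dℙ(ω)) and the weights of Σ are uniform on k_i symbols for each i. -/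
/-! Under the Bernoulli measure the `s` coordinates of a block are independent with law `q`,
so the expected logarithm of a product over a set `T` of coordinates is `#T` times the
one-coordinate expectation. The numerator of `s-dim(Σ'')` collects `s - 1` coordinates and the
denominator all `s`, whence the factor `(s - 1) / s`. -/

open Finset

theorem sum_prod_mul_apply_eq {ι I R : Type*} [Fintype ι] [DecidableEq ι] [Fintype I]
    [CommSemiring R] {q : I → R} (hq : ∑ i, q i = 1) (f : I → R) (l : ι) :
    ∑ v : ι → I, (∏ m, q (v m)) * f (v l) = ∑ i, q i * f i := by
  set g : ι → I → R := Function.update (fun _ => q) l (fun i => q i * f i)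
  have hgl : g l = fun i => q i * f i := Function.update_self _ _ _
  have hg : ∀ m ∈ ({l}ᶜ : Finset ι), g m = q := fun m hm =>
    Function.update_of_ne (mem_compl.1 hm ∘ mem_singleton.2) _ _
  calc ∑ v : ι → I, (∏ m, q (v m)) * f (v l) = ∑ v : ι → I, ∏ m, g m (v m) := by
        refine sum_congr rfl fun v _ => ?_
        rw [Fintype.prod_eq_mul_prod_compl l, Fintype.prod_eq_mul_prod_compl l,
          prod_congr rfl fun m hm => congrFun (hg m hm) (v m), hgl]
        ring
    _ = ∏ m, ∑ i, g m i := (Fintype.prod_sum g).symm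
    _ = ∑ i, q i * f i := by
        rw [Fintype.prod_eq_mul_prod_compl l, prod_congr rfl fun m hm => by rw [hg m hm, hq], hgl]
        simp

theorem sum_prod_mul_sum_apply_eq {ι I R : Type*} [Fintype ι] [DecidableEq ι] [Fintype I]
    [CommSemiring R] {q : I → R} (hq : ∑ i, q i = 1) (f : I → R) (T : Finset ι) :
    ∑ v : ι → I, (∏ m, q (v m)) * ∑ l ∈ T, f (v l) = #T * ∑ i, q i * f i := by
  simp only [mul_sum T]
  rw [sum_comm, sum_congr rfl fun l _ => sum_prod_mul_apply_eq hq f l, sum_const, nsmul_eq_mul]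

theorem sdim_skip_model_general {I : Type*} [Fintype I] (s : ℕ) (hs : 1 ≤ s)
    (q : I → ℝ) (hq1 : ∑ i, q i = 1)
    (lam : I → ℝ) (hlam : ∀ i, lam i ∈ Set.Ioo (0 : ℝ) 1)
    (k : I → ℕ) (hk : ∀ i, 1 ≤ k i) :
    (∑ v : Fin s → I, (∏ l, q (v l)) *
        Real.log (∏ l ∈ Finset.univ.filter (fun l : Fin s => (l : ℕ) < s - 1),
          (k (v l) : ℝ))) /
      (-(∑ v : Fin s → I, (∏ l, q (v l)) * Real.log (∏ l, lam (v l))))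
    = (1 - 1 / (s : ℝ)) *
        ((∑ i, q i * Real.log (k i)) / (-(∑ i, q i * Real.log (lam i)))) := by
  have hk_ne : ∀ i, (k i : ℝ) ≠ 0 := fun i => by have := hk i; positivity
  simp only [Real.log_prod fun l _ => hk_ne _, Real.log_prod fun l _ => (hlam _).1.ne',
    sum_prod_mul_sum_apply_eq hq1 (fun i => Real.log (k i)),
    sum_prod_mul_sum_apply_eq hq1 (fun i => Real.log (lam i)), Fin.card_filter_val_lt,
    card_univ, Fintype.card_fin, min_eq_right (Nat.sub_le s 1), Nat.cast_sub hs]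
  have hs0 : (s : ℝ) ≠ 0 := by positivity
  field_simp
  ring

/-- Similarity dimension of the "skip every s-th coordinate" model: with uniform weights
and Bernoulli selection measure with marginal `q`, the model `Σ''` on the alphabet `I^s`
(contracting by `∏_{l<s} λ_{î_l}` and having `∏_{l<s−1} k_{î_l}` maps with uniform weights)
satisfies `s-dim(Σ'') = (1 − 1/s) · s-dim(Σ)`. -/
theorem sdim_skip_model {I : Type*} [Fintype I] (s : ℕ) (hs : 1 ≤ s)
    (q : I → ℝ) (hq0 : ∀ i, 0 ≤ q i) (hq1 : ∑ i, q i = 1)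
    (lam : I → ℝ) (hlam : ∀ i, lam i ∈ Set.Ioo (0 : ℝ) 1)
    (k : I → ℕ) (hk : ∀ i, 1 ≤ k i) :
    (∑ v : Fin s → I, (∏ l, q (v l)) *
        Real.log (∏ l ∈ Finset.univ.filter (fun l : Fin s => (l : ℕ) < s - 1),
          (k (v l) : ℝ))) /
      (-(∑ v : Fin s → I, (∏ l, q (v l)) * Real.log (∏ l, lam (v l))))
    = (1 - 1 / (s : ℝ)) *
        ((∑ i, q i * Real.log (k i)) / (-(∑ i, q i * Real.log (lam i)))) :=
  sdim_skip_model_general s hs q hq1 lam hlam k hk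
end

section
/- Fix k ≥ 2 distinct reals t₁ < ⋯ < t_k and positive reals β₁,…,β_k. For distinct infinite sequences u, u' ∈ {1,…,k}^ℕ, define ψ_{u,u'}(λ) = ∑_{n=0}^∞ (λ^{β_{u_1}+⋯+β_{u_n}} t_{u_{n+1}} − λ^{β_{u'_1}+⋯+β_{u'_n}} t_{u'_{n+1}}) for λ ∈ (0,1). Then ψ_{u,u'} is not identically zero on (0,1). -/
/-!
`ψ_{u,u'}(λ)` is the difference of the values at `u` and `u'` of the coding map
`π_λ(w) = ∑ₙ λ^{β_{w_0}+⋯+β_{w_{n-1}}} t_{w_n}`. If `u` and `u'` first differ at index `m`,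
the first `m` terms cancel and
`ψ_{u,u'}(λ) = λ^{β_{u_0}+⋯+β_{u_{m-1}}} (π_λ(σᵐu) - π_λ(σᵐu'))`, where `σ` is the shift.
Since every weight `β_i` is bounded below by a positive constant, dominated convergence gives
`π_λ(w) → t_{w_0}` as `λ → 0⁺`, so the bracket tends to `t_{u_m} - t_{u'_m} ≠ 0`.
-/

open Filter Finset Topology

section RpowSeries

variable {x b M : ℝ} {a c : ℕ → ℝ}

theorem rpow_sum_range_le_pow (hx0 : 0 < x) (hx1 : x ≤ 1) (ha : ∀ j, b ≤ a j) (n : ℕ) :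
    x ^ (∑ j ∈ range n, a j) ≤ (x ^ b) ^ n := by
  have hsum : (n : ℝ) * b ≤ ∑ j ∈ range n, a j := by
    simpa using Finset.sum_le_sum fun j (_ : j ∈ range n) => ha j
  calc x ^ (∑ j ∈ range n, a j) ≤ x ^ ((n : ℝ) * b) :=
        Real.rpow_le_rpow_of_exponent_ge hx0 hx1 hsum
    _ = (x ^ b) ^ n := by rw [mul_comm, Real.rpow_mul hx0.le, Real.rpow_natCast]

theorem abs_rpow_sum_range_mul_le {y : ℝ} (hx0 : 0 < x) (hxy : x ≤ y) (hy1 : y ≤ 1)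
    (hb : 0 ≤ b) (ha : ∀ j, b ≤ a j) (hc : ∀ n, |c n| ≤ M) (n : ℕ) :
    |x ^ (∑ j ∈ range n, a j) * c n| ≤ M * (y ^ b) ^ n := by
  have hpow : x ^ (∑ j ∈ range n, a j) ≤ (y ^ b) ^ n :=
    (rpow_sum_range_le_pow hx0 (hxy.trans hy1) ha n).trans
      (pow_le_pow_left₀ (by positivity) (Real.rpow_le_rpow hx0.le hxy hb) n)
  rw [abs_mul, abs_of_pos (by positivity), mul_comm]
  exact mul_le_mul (hc n) hpow (by positivity) ((abs_nonneg _).trans (hc n))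

theorem summable_rpow_sum_range_mul (hx0 : 0 < x) (hx1 : x < 1) (hb : 0 < b)
    (ha : ∀ j, b ≤ a j) (hc : ∀ n, |c n| ≤ M) :
    Summable fun n => x ^ (∑ j ∈ range n, a j) * c n :=
  .of_norm_bounded
    ((summable_geometric_of_lt_one (by positivity) (Real.rpow_lt_one hx0.le hx1 hb)).mul_left M)
    (abs_rpow_sum_range_mul_le hx0 le_rfl hx1.le hb.le ha hc)

/-- Only the `n = 0` term survives in the limit: every other exponent is at least `b > 0`. -/
theorem tendsto_tsum_rpow_sum_range_mul (hb : 0 < b) (ha : ∀ j, b ≤ a j)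
    (hc : ∀ n, |c n| ≤ M) :
    Tendsto (fun x => ∑' n, x ^ (∑ j ∈ range n, a j) * c n) (𝓝[>] 0) (𝓝 (c 0)) := by
  have hlim : Tendsto (fun x => ∑' n, x ^ (∑ j ∈ range n, a j) * c n) (𝓝[>] 0)
      (𝓝 (∑' n, if n = 0 then c 0 else 0)) := by
    refine tendsto_tsum_of_dominated_convergence (bound := fun n => M * ((1 / 2) ^ b) ^ n)
      ((summable_geometric_of_lt_one (by positivity)
        (Real.rpow_lt_one (by norm_num) (by norm_num) hb)).mul_left M) (fun n => ?_) ?_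
    · rcases n with _ | n
      · simp
      · have hpos : 0 < ∑ j ∈ range (n + 1), a j :=
          Finset.sum_pos (fun j _ => hb.trans_le (ha j)) nonempty_range_add_one
        have hrpow : Tendsto (fun x : ℝ => x ^ (∑ j ∈ range (n + 1), a j)) (𝓝[>] 0) (𝓝 0) := by
          simpa [Real.zero_rpow hpos.ne'] using
            (Real.continuousAt_rpow_const 0 _ (Or.inr hpos.le)).tendsto.mono_left
              nhdsWithin_le_nhds
        simpa using hrpow.mul_const (c (n + 1))
    · filter_upwards [Ioo_mem_nhdsGT (by norm_num : (0 : ℝ) < 1 / 2)] with x hx n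
      exact abs_rpow_sum_range_mul_le hx.1 hx.2.le (by norm_num) hb.le ha hc n
  simpa using hlim

end RpowSeries

section CodingMap

variable {ι : Type*} {β : ι → ℝ} {x : ℝ}

/-- The coding map of the iterated function system `{y ↦ x^{β_i} y + t_i}`. -/
noncomputable def codingMap (β t : ι → ℝ) (x : ℝ) (w : ℕ → ι) : ℝ :=
  ∑' n, x ^ (∑ j ∈ range n, β (w j)) * t (w n)

variable [Finite ι] (t : ι → ℝ)

theorem summable_codingMap (hβ : ∀ i, 0 < β i) (hx0 : 0 < x) (hx1 : x < 1) (w : ℕ → ι) :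
    Summable fun n => x ^ (∑ j ∈ range n, β (w j)) * t (w n) := by
  have : Nonempty ι := ⟨w 0⟩
  obtain ⟨i₀, hi₀⟩ := Finite.exists_min β
  obtain ⟨i₁, hi₁⟩ := Finite.exists_max fun i => |t i|
  exact summable_rpow_sum_range_mul hx0 hx1 (hβ i₀) (fun j => hi₀ (w j)) fun n => hi₁ (w n)

theorem tendsto_codingMap_nhdsGT_zero (hβ : ∀ i, 0 < β i) (w : ℕ → ι) :
    Tendsto (fun x => codingMap β t x w) (𝓝[>] 0) (𝓝 (t (w 0))) := by
  have : Nonempty ι := ⟨w 0⟩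
  obtain ⟨i₀, hi₀⟩ := Finite.exists_min β
  obtain ⟨i₁, hi₁⟩ := Finite.exists_max fun i => |t i|
  exact tendsto_tsum_rpow_sum_range_mul (hβ i₀) (fun j => hi₀ (w j)) fun n => hi₁ (w n)

theorem codingMap_eq_sum_add_rpow_mul_shift (hβ : ∀ i, 0 < β i) (hx0 : 0 < x) (hx1 : x < 1)
    (w : ℕ → ι) (m : ℕ) :
    codingMap β t x w = ∑ n ∈ range m, x ^ (∑ j ∈ range n, β (w j)) * t (w n)
      + x ^ (∑ j ∈ range m, β (w j)) * codingMap β t x (fun j => w (m + j)) := by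
  rw [codingMap, codingMap, ← (summable_codingMap t hβ hx0 hx1 w).sum_add_tsum_nat_add m,
    ← tsum_mul_left]
  congr 2 with n
  rw [add_comm n m, Finset.sum_range_add, Real.rpow_add hx0, mul_assoc]

theorem codingMap_sub_codingMap_of_forall_lt_eq (hβ : ∀ i, 0 < β i) (hx0 : 0 < x) (hx1 : x < 1)
    {u u' : ℕ → ι} {m : ℕ} (hagree : ∀ j < m, u j = u' j) :
    codingMap β t x u - codingMap β t x u' = x ^ (∑ j ∈ range m, β (u j)) *
      (codingMap β t x (fun j => u (m + j)) - codingMap β t x (fun j => u' (m + j))) := by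
  have hexp : ∀ n ≤ m, ∑ j ∈ range n, β (u j) = ∑ j ∈ range n, β (u' j) := fun n hn =>
    Finset.sum_congr rfl fun j hj => by rw [hagree j ((mem_range.1 hj).trans_le hn)]
  have hprefix : ∑ n ∈ range m, x ^ (∑ j ∈ range n, β (u j)) * t (u n)
      = ∑ n ∈ range m, x ^ (∑ j ∈ range n, β (u' j)) * t (u' n) :=
    Finset.sum_congr rfl fun n hn => by
      rw [hexp n (mem_range.1 hn).le, hagree n (mem_range.1 hn)]
  rw [codingMap_eq_sum_add_rpow_mul_shift t hβ hx0 hx1 u m,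
    codingMap_eq_sum_add_rpow_mul_shift t hβ hx0 hx1 u' m, hprefix, ← hexp m le_rfl]
  ring

end CodingMap

theorem psi_not_identically_zero_general (k : ℕ)
    (t : Fin k → ℝ) (ht : StrictMono t)
    (β : Fin k → ℝ) (hβ : ∀ i, 0 < β i)
    (u u' : ℕ → Fin k) (huu' : u ≠ u') :
    ∃ lam : ℝ, lam ∈ Set.Ioo (0 : ℝ) 1 ∧
      (∑' n : ℕ,
        (lam ^ (∑ j ∈ Finset.range n, β (u j)) * t (u n)
          - lam ^ (∑ j ∈ Finset.range n, β (u' j)) * t (u' n))) ≠ 0 := by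
  have hdiff : ∃ n, u n ≠ u' n := Function.ne_iff.1 huu'
  obtain ⟨m, hm, hagree⟩ : ∃ m, u m ≠ u' m ∧ ∀ j < m, u j = u' j :=
    ⟨Nat.find hdiff, Nat.find_spec hdiff, fun j hj => not_not.1 (Nat.find_min hdiff hj)⟩
  have hlim : Tendsto (fun x => codingMap β t x (fun j => u (m + j))
      - codingMap β t x (fun j => u' (m + j))) (𝓝[>] 0) (𝓝 (t (u m) - t (u' m))) :=
    (tendsto_codingMap_nhdsGT_zero t hβ _).sub (tendsto_codingMap_nhdsGT_zero t hβ _)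
  obtain ⟨x, hne, hx⟩ := ((hlim.eventually_ne (sub_ne_zero.2 (ht.injective.ne hm))).and
    (Ioo_mem_nhdsGT one_pos)).exists
  refine ⟨x, hx, ?_⟩
  rw [(summable_codingMap t hβ hx.1 hx.2 u).tsum_sub (summable_codingMap t hβ hx.1 hx.2 u')]
  change codingMap β t x u - codingMap β t x u' ≠ 0
  rw [codingMap_sub_codingMap_of_forall_lt_eq t hβ hx.1 hx.2 hagree]
  exact mul_ne_zero (Real.rpow_pos_of_pos hx.1 _).ne' hne

/-- For distinct sequences `u ≠ u'` in `{1,…,k}^ℕ`, the function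
`ψ_{u,u'}(λ) = ∑ₙ (λ^{β_{u_1}+⋯+β_{u_n}} t_{u_{n+1}} − λ^{β_{u'_1}+⋯+β_{u'_n}} t_{u'_{n+1}})`
is not identically zero on `(0,1)`. -/
theorem psi_not_identically_zero (k : ℕ) (hk : 2 ≤ k)
    (t : Fin k → ℝ) (ht : StrictMono t)
    (β : Fin k → ℝ) (hβ : ∀ i, 0 < β i)
    (u u' : ℕ → Fin k) (huu' : u ≠ u') :
    ∃ lam : ℝ, lam ∈ Set.Ioo (0 : ℝ) 1 ∧
      (∑' n : ℕ,
        (lam ^ (∑ j ∈ Finset.range n, β (u j)) * t (u n)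
          - lam ^ (∑ j ∈ Finset.range n, β (u' j)) * t (u' n))) ≠ 0 :=
  psi_not_identically_zero_general k t ht β hβ u u' huu'
end
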